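/- arXiv:2411.09142 — 11 statements merged into one kernel-verified Lean document; each statement's English description precedes it below -/
import Mathlib

section
/- For all probability measures P and Q on a measurable space Ω and every ε ∈ ℝ, the privacy profiles satisfy the reversal identity δ_{Q|P}(ε) = 1 − e^ε + e^ε · δ_{P|Q}(−ε). -/
/-! Passing to complements, `Q(S) − e^ε P(S) = 1 − e^ε + e^ε (P(Sᶜ) − e^{-ε} Q(Sᶜ))` for every
measurable `S`. Since complementation permutes the measurable sets and `x ↦ 1 − e^ε + e^ε x` is
continuous and monotone, taking suprema on both sides gives the reversal identity. -/

open MeasureTheory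

/-- The privacy profile `δ_{P|Q}(ε) := sup { P(S) − e^ε · Q(S) : S measurable }`. -/
noncomputable def privProfile {Ω : Type*} [MeasurableSpace Ω]
    (P Q : Measure Ω) (ε : ℝ) : ℝ :=
  ⨆ S : {S : Set Ω // MeasurableSet S}, ((P S.1).toReal - Real.exp ε * (Q S.1).toReal)

namespace MeasureTheory

variable {Ω : Type*} [MeasurableSpace Ω]

lemma bddAbove_range_measureReal_sub_exp_mul (P Q : Measure Ω) [IsFiniteMeasure P] (ε : ℝ) :
    BddAbove (Set.range fun S : {S : Set Ω // MeasurableSet S} =>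
      P.real S - Real.exp ε * Q.real S) := by
  refine ⟨P.real Set.univ, ?_⟩
  rintro _ ⟨S, rfl⟩
  have hQ : 0 ≤ Real.exp ε * Q.real S := by positivity
  linarith [measureReal_mono (μ := P) (Set.subset_univ S.1)]

lemma measureReal_sub_exp_mul_eq_compl (P Q : Measure Ω) [IsProbabilityMeasure P]
    [IsProbabilityMeasure Q] (ε : ℝ) {S : Set Ω} (hS : MeasurableSet S) :
    Q.real S - Real.exp ε * P.real S =
      1 - Real.exp ε + Real.exp ε * (P.real Sᶜ - Real.exp (-ε) * Q.real Sᶜ) := by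
  rw [probReal_compl_eq_one_sub hS, probReal_compl_eq_one_sub hS, Real.exp_neg]
  field_simp
  ring

end MeasureTheory

theorem privProfile_reversal {Ω : Type*} [MeasurableSpace Ω]
    (P Q : Measure Ω) [IsProbabilityMeasure P] [IsProbabilityMeasure Q] (ε : ℝ) :
    privProfile Q P ε = 1 - Real.exp ε + Real.exp ε * privProfile P Q (-ε) := by
  set f : {S : Set Ω // MeasurableSet S} → ℝ := fun S => P.real S - Real.exp (-ε) * Q.real S
  set affine : ℝ → ℝ := fun x => 1 - Real.exp ε + Real.exp ε * x
  have affine_mono : Monotone affine :=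
    (monotone_id.const_mul (Real.exp_pos ε).le).const_add _
  calc privProfile Q P ε = ⨆ S, affine (f Sᶜ) :=
        iSup_congr fun S => measureReal_sub_exp_mul_eq_compl P Q ε S.2
    _ = ⨆ S, affine (f S) := compl_surjective.iSup_comp (affine ∘ f)
    _ = affine (⨆ S, f S) :=
        (affine_mono.map_ciSup_of_continuousAt (by fun_prop)
          (bddAbove_range_measureReal_sub_exp_mul P Q (-ε))).symm
end

section
/- For all probability measures P and Q on a measurable space Ω and every β ∈ [0,1], the left-continuous inverse of the trade-off function satisfies f_{P|Q}^{−1}(β) := inf { α ∈ [0,1] : f_{P|Q}(α) ≤ β } = f_{Q|P}(β); that is, inverting the trade-off curve exchanges the roles of P and Q. -/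
open MeasureTheory

/-- The trade-off function `f_{P|Q}(α) := inf { 1 − ∫ φ dQ : φ measurable, 0 ≤ φ ≤ 1, ∫ φ dP ≤ α }`. -/
noncomputable def tradeOff {Ω : Type*} [MeasurableSpace Ω]
    (P Q : Measure Ω) (α : ℝ) : ℝ :=
  sInf {β : ℝ | ∃ φ : Ω → ℝ, Measurable φ ∧ (∀ x, φ x ∈ Set.Icc (0 : ℝ) 1) ∧
    (∫ x, φ x ∂P) ≤ α ∧ β = 1 - ∫ x, φ x ∂Q}

open Filter Topology Set

/-! A test that is small under `P` and large under `Q` is, after replacing `φ` by `1 - φ`, a test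
that is small under `Q` and large under `P`; this gives `f_{P|Q}⁻¹(β) ≤ f_{Q|P}(β)` at once.
For the converse, a near-optimal test for `f_{P|Q}(α) ≤ β` is complemented and scaled by
`c < 1`, which makes its `Q`-integral at most `β` at a cost `1 - c` in power, and `c → 1`.
The scaling is unavailable for `β = 0`; there the near-optimal tests `φₙ` tend to `1` in
`L¹(Q)`, hence `Q`-a.e. along a subsequence, and the indicator of the set where they do not
converge is a test of `Q`-size `0` whose `P`-power is at least `1 - α` by dominated
convergence. -/

section Tests

variable {Ω : Type*} [MeasurableSpace Ω] {μ : Measure Ω} {φ : Ω → ℝ}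

def IsTest (φ : Ω → ℝ) : Prop :=
  Measurable φ ∧ ∀ x, φ x ∈ Icc (0 : ℝ) 1

lemma isTest_indicator_one {s : Set Ω} (hs : MeasurableSet s) : IsTest (s.indicator 1) := by
  refine ⟨measurable_one.indicator hs, fun x => ?_⟩
  by_cases hx : x ∈ s <;> simp [hx]

namespace IsTest

lemma one_sub (hφ : IsTest φ) : IsTest (fun x => 1 - φ x) :=
  ⟨measurable_const.sub hφ.1, fun x => ⟨by linarith [(hφ.2 x).2], by linarith [(hφ.2 x).1]⟩⟩

lemma const_mul (hφ : IsTest φ) {c : ℝ} (hc : c ∈ Icc (0 : ℝ) 1) : IsTest (fun x => c * φ x) :=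
  ⟨measurable_const.mul hφ.1, fun x =>
    ⟨mul_nonneg hc.1 (hφ.2 x).1, mul_le_one₀ hc.2 (hφ.2 x).1 (hφ.2 x).2⟩⟩

lemma integrable (hφ : IsTest φ) [IsFiniteMeasure μ] : Integrable φ μ :=
  (integrable_const (1 : ℝ)).mono' hφ.1.aestronglyMeasurable <| ae_of_all _ fun x => by
    rw [Real.norm_eq_abs, abs_of_nonneg (hφ.2 x).1]
    exact (hφ.2 x).2

lemma integral_le_measureReal_univ (hφ : IsTest φ) [IsFiniteMeasure μ] :
    ∫ x, φ x ∂μ ≤ μ.real univ := by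
  simpa using integral_mono hφ.integrable (integrable_const 1) fun x => (hφ.2 x).2

lemma integral_mem_Icc (hφ : IsTest φ) [IsProbabilityMeasure μ] :
    ∫ x, φ x ∂μ ∈ Icc (0 : ℝ) 1 :=
  ⟨integral_nonneg fun x => (hφ.2 x).1, probReal_univ (μ := μ) ▸ hφ.integral_le_measureReal_univ⟩

lemma integral_one_sub (hφ : IsTest φ) [IsProbabilityMeasure μ] :
    ∫ x, (1 - φ x) ∂μ = 1 - ∫ x, φ x ∂μ := by
  rw [integral_sub (integrable_const 1) hφ.integrable]
  simp

lemma exists_subseq_ae_tendsto_one [IsFiniteMeasure μ] {φ : ℕ → Ω → ℝ} (hφ : ∀ n, IsTest (φ n))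
    (hlim : Tendsto (fun n => ∫ x, (1 - φ n x) ∂μ) atTop (𝓝 0)) :
    ∃ ns : ℕ → ℕ, ∀ᵐ x ∂μ, Tendsto (fun k => φ (ns k) x) atTop (𝓝 1) := by
  have hL1 : Tendsto (fun n => eLpNorm (φ n - fun _ => 1) 1 μ) atTop (𝓝 0) := by
    have hnorm : ∀ n, eLpNorm (φ n - fun _ => 1) 1 μ = ENNReal.ofReal (∫ x, (1 - φ n x) ∂μ) := by
      intro n
      rw [eLpNorm_one_eq_lintegral_enorm,
        ← ofReal_integral_norm_eq_lintegral_enorm ((hφ n).integrable.sub (integrable_const 1))]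
      congr 2 with x
      rw [Pi.sub_apply, Real.norm_eq_abs, abs_of_nonpos (by linarith [((hφ n).2 x).2])]
      ring
    simp_rw [hnorm]
    simpa using ENNReal.tendsto_ofReal hlim
  obtain ⟨ns, -, hae⟩ := (tendstoInMeasure_of_tendsto_eLpNorm one_ne_zero
    (fun n => (hφ n).1.aestronglyMeasurable) aestronglyMeasurable_const hL1).exists_seq_tendsto_ae
  exact ⟨ns, hae⟩

lemma measureReal_setOf_tendsto_one_le [IsFiniteMeasure μ] {φ : ℕ → Ω → ℝ} {α : ℝ}
    (hφ : ∀ n, IsTest (φ n)) (hα : ∀ n, ∫ x, φ n x ∂μ ≤ α) :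
    μ.real {x | Tendsto (fun n => φ n x) atTop (𝓝 1)} ≤ α := by
  set E := {x | Tendsto (fun n => φ n x) atTop (𝓝 1)}
  have hE : MeasurableSet E := measurableSet_tendsto _ fun n => (hφ n).1
  have hlim : Tendsto (fun n => ∫ x, E.indicator (φ n) x ∂μ) atTop (𝓝 (μ.real E)) := by
    rw [← integral_indicator_one hE]
    refine tendsto_integral_of_dominated_convergence (fun _ => 1)
      (fun n => ((hφ n).1.indicator hE).aestronglyMeasurable) (integrable_const 1)
      (fun n => ae_of_all _ fun x => (norm_indicator_le_norm_self _ x).trans ?_)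
      (ae_of_all _ fun x => ?_)
    · rw [Real.norm_eq_abs, abs_of_nonneg ((hφ n).2 x).1]
      exact ((hφ n).2 x).2
    · by_cases hx : x ∈ E
      · simp only [indicator_of_mem hx, Pi.one_apply]
        exact hx
      · simp [hx]
  refine le_of_tendsto' hlim fun n => le_trans ?_ (hα n)
  exact integral_mono ((hφ n).integrable.indicator hE) (hφ n).integrable
    (indicator_le_self' fun x _ => ((hφ n).2 x).1)

end IsTest

end Tests

section TradeOff

variable {Ω : Type*} [MeasurableSpace Ω] {P Q : Measure Ω} {φ ψ : Ω → ℝ} {α β : ℝ}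

lemma tradeOff_le [IsFiniteMeasure Q] (hφ : IsTest φ) (hP : ∫ x, φ x ∂P ≤ α) :
    tradeOff P Q α ≤ 1 - ∫ x, φ x ∂Q := by
  refine csInf_le ⟨1 - Q.real univ, ?_⟩ ⟨φ, hφ.1, hφ.2, hP, rfl⟩
  rintro _ ⟨φ, hm, hb, -, rfl⟩
  linarith [IsTest.integral_le_measureReal_univ (μ := Q) ⟨hm, hb⟩]

lemma le_tradeOff {c : ℝ} (hα : 0 ≤ α)
    (h : ∀ φ, IsTest φ → ∫ x, φ x ∂P ≤ α → c ≤ 1 - ∫ x, φ x ∂Q) : c ≤ tradeOff P Q α := by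
  refine le_csInf ⟨_, 0, measurable_const, fun _ => ⟨le_rfl, zero_le_one⟩, by simpa, rfl⟩ ?_
  rintro _ ⟨φ, hm, hb, hP, rfl⟩
  exact h φ ⟨hm, hb⟩ hP

lemma exists_isTest_of_tradeOff_lt {b : ℝ} (hα : 0 ≤ α) (h : tradeOff P Q α < b) :
    ∃ φ, IsTest φ ∧ ∫ x, φ x ∂P ≤ α ∧ 1 - ∫ x, φ x ∂Q < b := by
  by_contra! hcon
  exact h.not_ge (le_tradeOff hα hcon)

variable [IsProbabilityMeasure P] [IsProbabilityMeasure Q]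

lemma tradeOff_one_nonpos : tradeOff P Q 1 ≤ 0 := by
  simpa using tradeOff_le (P := P) (Q := Q) (isTest_indicator_one MeasurableSet.univ) (by simp)

lemma tradeOff_one_sub_integral_le (hψ : IsTest ψ) (hQ : ∫ x, ψ x ∂Q ≤ β) :
    tradeOff P Q (1 - ∫ x, ψ x ∂P) ≤ β := by
  have h := tradeOff_le (Q := Q) hψ.one_sub (hψ.integral_one_sub (μ := P)).le
  rw [hψ.integral_one_sub] at h
  linarith

lemma tradeOff_le_of_tradeOff_le_of_pos (hα : 0 ≤ α) (hβ : 0 < β) (h : tradeOff P Q α ≤ β) :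
    tradeOff Q P β ≤ α := by
  have hscaled : ∀ c ∈ Ioo (0 : ℝ) 1, tradeOff Q P β ≤ 1 - c * (1 - α) := by
    rintro c ⟨hc0, hc1⟩
    have hβc : β < β / c := (lt_div_iff₀ hc0).mpr (mul_lt_of_lt_one_right hβ hc1)
    obtain ⟨φ, hφ, hφP, hφQ⟩ := exists_isTest_of_tradeOff_lt hα (h.trans_lt hβc)
    have hψQ : ∫ x, c * (1 - φ x) ∂Q ≤ β := by
      rw [integral_const_mul, hφ.integral_one_sub]
      linarith [(lt_div_iff₀' hc0).mp hφQ]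
    calc tradeOff Q P β ≤ 1 - ∫ x, c * (1 - φ x) ∂P :=
          tradeOff_le (hφ.one_sub.const_mul ⟨hc0.le, hc1.le⟩) hψQ
      _ = 1 - c * (1 - ∫ x, φ x ∂P) := by rw [integral_const_mul, hφ.integral_one_sub]
      _ ≤ 1 - c * (1 - α) := by nlinarith
  have hlim : Tendsto (fun c : ℝ => 1 - c * (1 - α)) (𝓝[<] 1) (𝓝 α) :=
    ((by fun_prop : Continuous fun c : ℝ => 1 - c * (1 - α)).tendsto' 1 α (by ring)).mono_left
      nhdsWithin_le_nhds
  exact ge_of_tendsto hlim (eventually_of_mem (Ioo_mem_nhdsLT zero_lt_one) hscaled)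

lemma tradeOff_zero_le_of_tradeOff_nonpos (hα : 0 ≤ α) (h : tradeOff P Q α ≤ 0) :
    tradeOff Q P 0 ≤ α := by
  choose φ hφ hφP hφQ using fun n : ℕ =>
    exists_isTest_of_tradeOff_lt hα (h.trans_lt (Nat.one_div_pos_of_nat (n := n)))
  have hQ : Tendsto (fun n => ∫ x, (1 - φ n x) ∂Q) atTop (𝓝 0) := by
    refine squeeze_zero (fun n => ?_) (fun n => ?_) tendsto_one_div_add_atTop_nhds_zero_nat
    · exact integral_nonneg fun x => ((hφ n).one_sub.2 x).1
    · rw [(hφ n).integral_one_sub]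
      exact (hφQ n).le
  obtain ⟨ns, hae⟩ := IsTest.exists_subseq_ae_tendsto_one hφ hQ
  set E := {x | Tendsto (fun k => φ (ns k) x) atTop (𝓝 1)}
  have hE : MeasurableSet E := measurableSet_tendsto _ fun k => (hφ (ns k)).1
  have hQE : ∫ x, Eᶜ.indicator (1 : Ω → ℝ) x ∂Q ≤ 0 := by
    rw [integral_indicator_one hE.compl, measureReal_def, show Q Eᶜ = 0 from ae_iff.mp hae]
    simp
  calc tradeOff Q P 0 ≤ 1 - ∫ x, Eᶜ.indicator (1 : Ω → ℝ) x ∂P :=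
        tradeOff_le (isTest_indicator_one hE.compl) hQE
    _ = P.real E := by rw [integral_indicator_one hE.compl, measureReal_compl hE]; simp
    _ ≤ α := IsTest.measureReal_setOf_tendsto_one_le (fun k => hφ (ns k)) fun k => hφP (ns k)

lemma tradeOff_le_of_tradeOff_le (hα : 0 ≤ α) (hβ : 0 ≤ β) (h : tradeOff P Q α ≤ β) :
    tradeOff Q P β ≤ α := by
  rcases hβ.eq_or_lt with rfl | hβ
  · exact tradeOff_zero_le_of_tradeOff_nonpos hα h
  · exact tradeOff_le_of_tradeOff_le_of_pos hα hβ h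

end TradeOff

theorem tradeOff_inverse {Ω : Type*} [MeasurableSpace Ω]
    (P Q : Measure Ω) [IsProbabilityMeasure P] [IsProbabilityMeasure Q]
    (β : ℝ) (hβ : β ∈ Set.Icc (0 : ℝ) 1) :
    sInf {α : ℝ | α ∈ Set.Icc (0 : ℝ) 1 ∧ tradeOff P Q α ≤ β} = tradeOff Q P β := by
  have hone : (1 : ℝ) ∈ {α : ℝ | α ∈ Set.Icc (0 : ℝ) 1 ∧ tradeOff P Q α ≤ β} :=
    ⟨⟨zero_le_one, le_rfl⟩, tradeOff_one_nonpos.trans hβ.1⟩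
  apply le_antisymm
  · refine le_tradeOff hβ.1 fun ψ hψ hψQ => csInf_le ⟨0, fun _ hα => hα.1.1⟩ ⟨⟨?_, ?_⟩, ?_⟩
    · linarith [(hψ.integral_mem_Icc (μ := P)).2]
    · linarith [(hψ.integral_mem_Icc (μ := P)).1]
    · exact tradeOff_one_sub_integral_le hψ hψQ
  · exact le_csInf ⟨1, hone⟩ fun α hα => tradeOff_le_of_tradeOff_le hα.1.1 hβ.1 hα.2
end

section
/- Let ν_{P|Q} be the pushforward of P under θ ↦ log(p(θ)/q(θ)) and ν_{Q|P} the pushforward of Q under θ ↦ log(q(θ)/p(θ)). Then for every measurable set A ⊆ ℝ, ν_{P|Q}(A) = ∫_A e^z d ν̃(z), where ν̃ is the reflection of ν_{Q|P} defined by ν̃(A) := ν_{Q|P}(−A); equivalently, in terms of generalized densities, f_Z(z) = e^z · f_{Z′}(−z). -/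
/-!
With `L = log (f / g)`, at every point where `0 < f ↔ 0 < g` the densities satisfy
`f⁺ = g⁺ · exp L` (where `g ≤ 0` both sides are `0`), so `P = Q.withDensity (exp ∘ L)`. Pushing forward along `L` gives
`ν_{P|Q} = (Q.map L).withDensity exp`, and `Q.map L` is the reflection of `ν_{Q|P}`
because `log (g / f) = -L`.
-/

open MeasureTheory

lemma ENNReal.ofReal_eq_ofReal_mul_ofReal_exp_log_div {a b : ℝ} (h : 0 < a ↔ 0 < b) :
    ENNReal.ofReal a = ENNReal.ofReal b * ENNReal.ofReal (Real.exp (Real.log (a / b))) := by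
  by_cases hb : 0 < b
  · rw [← ENNReal.ofReal_mul hb.le, Real.exp_log (div_pos (h.2 hb) hb), mul_div_cancel₀ _ hb.ne']
  · have ha : a ≤ 0 := not_lt.mp (mt h.1 hb)
    rw [ENNReal.ofReal_of_nonpos ha, ENNReal.ofReal_of_nonpos (not_lt.mp hb), zero_mul]

namespace MeasureTheory.Measure

variable {α β : Type*} [MeasurableSpace α] [MeasurableSpace β]

lemma withDensity_ofReal_eq_withDensity_exp_log_div (μ : Measure α) {f g : α → ℝ}
    (hf : Measurable f) (hg : Measurable g) (hfg : ∀ᵐ x ∂μ, (0 < f x ↔ 0 < g x)) :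
    μ.withDensity (fun x => ENNReal.ofReal (f x))
      = (μ.withDensity fun x => ENNReal.ofReal (g x)).withDensity
          fun x => ENNReal.ofReal (Real.exp (Real.log (f x / g x))) := by
  rw [← withDensity_mul μ hg.ennreal_ofReal (hf.fun_div hg).log.exp.ennreal_ofReal]
  refine withDensity_congr_ae ?_
  filter_upwards [hfg] with x hx
  exact ENNReal.ofReal_eq_ofReal_mul_ofReal_exp_log_div hx

lemma map_withDensity_comp (μ : Measure α) {L : α → β} (hL : Measurable L)
    {h : β → ENNReal} (hh : Measurable h) :
    (μ.withDensity (h ∘ L)).map L = (μ.map L).withDensity h := by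
  ext s hs
  rw [map_apply hL hs, withDensity_apply _ (hL hs), withDensity_apply _ hs,
    setLIntegral_map hs hh hL, Function.comp_def]

lemma map_neg_map_log_div (μ : Measure α) {f g : α → ℝ} (hf : Measurable f)
    (hg : Measurable g) :
    (μ.map fun x => Real.log (g x / f x)).map (fun z : ℝ => -z)
      = μ.map fun x => Real.log (f x / g x) := by
  rw [map_map (measurable_neg : Measurable fun z : ℝ => -z) (hg.fun_div hf).log]
  congr 1
  funext x
  simp only [Function.comp_apply, ← Real.log_inv, inv_div]

end MeasureTheory.Measure

open Measure in
theorem pld_reversal_general {Ω : Type*} [MeasurableSpace Ω]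
    (μ : Measure Ω)
    (P Q : Measure Ω)
    (f g : Ω → ℝ) (hf : Measurable f) (hg : Measurable g)
    (hP : P = μ.withDensity (fun θ => ENNReal.ofReal (f θ)))
    (hQ : Q = μ.withDensity (fun θ => ENNReal.ofReal (g θ)))
    (hac : ∀ᵐ θ ∂μ, (0 < f θ ↔ 0 < g θ))
    (A : Set ℝ) (hA : MeasurableSet A) :
    (P.map (fun θ => Real.log (f θ / g θ))) A
      = ∫⁻ z in A, ENNReal.ofReal (Real.exp z)
          ∂((Q.map (fun θ => Real.log (g θ / f θ))).map (fun z : ℝ => -z)) := by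
  have hL : Measurable fun θ => Real.log (f θ / g θ) := (hf.fun_div hg).log
  have hP_density : P = Q.withDensity
      ((fun z => ENNReal.ofReal (Real.exp z)) ∘ fun θ => Real.log (f θ / g θ)) := by
    rw [hP, hQ]
    exact withDensity_ofReal_eq_withDensity_exp_log_div μ hf hg hac
  rw [map_neg_map_log_div Q hf hg, ← withDensity_apply _ hA, hP_density,
    map_withDensity_comp Q hL Real.measurable_exp.ennreal_ofReal]

theorem pld_reversal {Ω : Type*} [MeasurableSpace Ω]
    (μ : Measure Ω) [SigmaFinite μ]
    (P Q : Measure Ω) [IsProbabilityMeasure P] [IsProbabilityMeasure Q]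
    (f g : Ω → ℝ) (hf : Measurable f) (hg : Measurable g)
    (hf0 : 0 ≤ f) (hg0 : 0 ≤ g)
    (hP : P = μ.withDensity (fun θ => ENNReal.ofReal (f θ)))
    (hQ : Q = μ.withDensity (fun θ => ENNReal.ofReal (g θ)))
    (hac : ∀ᵐ θ ∂μ, (0 < f θ ↔ 0 < g θ))
    (A : Set ℝ) (hA : MeasurableSet A) :
    (P.map (fun θ => Real.log (f θ / g θ))) A
      = ∫⁻ z in A, ENNReal.ofReal (Real.exp z)
          ∂((Q.map (fun θ => Real.log (g θ / f θ))).map (fun z : ℝ => -z)) :=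
  pld_reversal_general μ P Q f g hf hg hP hQ hac A hA
end

section
/- For every ε ∈ ℝ, the privacy profile satisfies δ_{P|Q}(ε) = ν_{P|Q}((ε, ∞)) − e^ε · ν_{Q|P}((−∞, −ε)); that is, δ_{P|Q}(ε) = Pr[Z > ε] − e^ε · Pr[Z′ < −ε]. -/
/-!
The set `A = {e^ε g < f}` is a Hahn-positive set for `P − e^ε Q`: on `A` the density `f` of `P`
dominates the density `e^ε g` of `e^ε Q` and off `A` it is dominated by it, so
`P(S) − e^ε Q(S) ≤ P(A) − e^ε Q(A)` for every measurable `S` and the supremum is attained at `A`.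
Both `P` and `Q` live on `{f > 0} = {g > 0}`, where `A` coincides with `{log (f/g) > ε}` and
with `{log (g/f) < −ε}`.
-/

open MeasureTheory

open Set ENNReal

namespace Real

theorem lt_log_div_iff {a b : ℝ} (ha : 0 < a) (hb : 0 < b) (ε : ℝ) :
    ε < log (a / b) ↔ exp ε * b < a := by
  rw [lt_log_iff_exp_lt (div_pos ha hb), lt_div_iff₀ hb]

theorem log_div_lt_neg_iff {a b : ℝ} (ha : 0 < a) (hb : 0 < b) (ε : ℝ) :
    log (b / a) < -ε ↔ exp ε * b < a := by
  rw [← inv_div, log_inv, neg_lt_neg_iff, lt_log_div_iff ha hb]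

end Real

section

variable {Ω : Type*} [MeasurableSpace Ω]

theorem measureReal_le_of_restrict_le {P R : Measure Ω} [IsFiniteMeasure P] {A T : Set Ω}
    (hA : MeasurableSet A) (h : R.restrict A ≤ P.restrict A) (hT : T ⊆ A) :
    R.real T ≤ P.real T := by
  have hRP := h T
  rw [Measure.restrict_apply' hA, Measure.restrict_apply' hA, inter_eq_left.2 hT] at hRP
  exact toReal_mono (measure_ne_top _ _) hRP

theorem measureReal_sub_le_of_restrict_le {P R : Measure Ω} [IsFiniteMeasure P]
    [IsFiniteMeasure R] {A S : Set Ω} (hA : MeasurableSet A) (hS : MeasurableSet S)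
    (hle : R.restrict A ≤ P.restrict A) (hge : P.restrict Aᶜ ≤ R.restrict Aᶜ) :
    P.real S - R.real S ≤ P.real A - R.real A := by
  have hout := measureReal_le_of_restrict_le hA.compl hge (T := S \ A) fun _ hx => hx.2
  have hin := measureReal_le_of_restrict_le hA hle (T := A \ S) sdiff_subset
  have hPS := measureReal_inter_add_sdiff (μ := P) (s := S) hA
  have hRS := measureReal_inter_add_sdiff (μ := R) (s := S) hA
  have hPA := measureReal_inter_add_sdiff (μ := P) (s := A) hS
  have hRA := measureReal_inter_add_sdiff (μ := R) (s := A) hS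
  rw [inter_comm] at hPA hRA
  linarith

theorem privProfile_eq_of_forall_le {P Q : Measure Ω} {ε : ℝ} {A : Set Ω}
    (hA : MeasurableSet A)
    (h : ∀ S, MeasurableSet S →
      P.real S - Real.exp ε * Q.real S ≤ P.real A - Real.exp ε * Q.real A) :
    privProfile P Q ε = P.real A - Real.exp ε * Q.real A :=
  IsGreatest.csSup_eq ⟨⟨⟨A, hA⟩, rfl⟩, forall_mem_range.2 fun S => h S.1 S.2⟩

theorem restrict_withDensity_le_of_forall_mem {μ : Measure Ω} {F G : Ω → ℝ≥0∞} {A : Set Ω}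
    (hA : MeasurableSet A) (h : ∀ x ∈ A, F x ≤ G x) :
    (μ.withDensity F).restrict A ≤ (μ.withDensity G).restrict A := by
  rw [restrict_withDensity hA, restrict_withDensity hA]
  exact withDensity_mono (ae_restrict_of_forall_mem hA h)

theorem ae_pos_withDensity_ofReal {μ : Measure Ω} {f : Ω → ℝ} (hf : Measurable f) :
    ∀ᵐ θ ∂μ.withDensity (fun θ => ENNReal.ofReal (f θ)), 0 < f θ :=
  (ae_withDensity_iff hf.ennreal_ofReal).2 <|
    ae_of_all _ fun _ h => ofReal_pos.1 (pos_iff_ne_zero.2 h)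

theorem ae_pos_and_pos_withDensity_ofReal {μ : Measure Ω} {f g : Ω → ℝ} (hf : Measurable f)
    (hfg : ∀ᵐ θ ∂μ, (0 < f θ ↔ 0 < g θ)) :
    ∀ᵐ θ ∂μ.withDensity (fun θ => ENNReal.ofReal (f θ)), 0 < f θ ∧ 0 < g θ := by
  filter_upwards [ae_pos_withDensity_ofReal hf, (withDensity_absolutelyContinuous _ _).ae_le hfg]
    with θ hfθ hθ using ⟨hfθ, hθ.1 hfθ⟩

theorem privProfile_withDensity_ofReal {μ : Measure Ω} {f g : Ω → ℝ} (hf : Measurable f)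
    (hg : Measurable g) [IsFiniteMeasure (μ.withDensity fun θ => ENNReal.ofReal (f θ))]
    [IsFiniteMeasure (μ.withDensity fun θ => ENNReal.ofReal (g θ))] (ε : ℝ) :
    privProfile (μ.withDensity fun θ => ENNReal.ofReal (f θ))
        (μ.withDensity fun θ => ENNReal.ofReal (g θ)) ε =
      (μ.withDensity fun θ => ENNReal.ofReal (f θ)).real {θ | Real.exp ε * g θ < f θ}
        - Real.exp ε * (μ.withDensity fun θ => ENNReal.ofReal (g θ)).real
          {θ | Real.exp ε * g θ < f θ} := by
  set Q := μ.withDensity fun θ => ENNReal.ofReal (g θ)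
  set R := μ.withDensity fun θ => ENNReal.ofReal (Real.exp ε * g θ)
  have hRQ : R = ENNReal.ofReal (Real.exp ε) • Q := by
    rw [← withDensity_smul' _ _ ofReal_ne_top]
    exact congrArg μ.withDensity (funext fun θ => ofReal_mul (Real.exp_pos ε).le)
  have : IsFiniteMeasure R := hRQ ▸ Q.smul_finite ofReal_ne_top
  have hRreal (S : Set Ω) : R.real S = Real.exp ε * Q.real S := by
    simp [hRQ, Measure.real, toReal_mul, (Real.exp_pos ε).le]
  have hA : MeasurableSet {θ | Real.exp ε * g θ < f θ} := measurableSet_lt (hg.const_mul _) hf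
  refine privProfile_eq_of_forall_le hA fun S hS => ?_
  simp only [← hRreal]
  refine measureReal_sub_le_of_restrict_le hA hS ?_ ?_
  · exact restrict_withDensity_le_of_forall_mem hA fun θ hθ => ofReal_le_ofReal hθ.le
  · exact restrict_withDensity_le_of_forall_mem hA.compl fun θ hθ =>
      ofReal_le_ofReal (not_lt.1 hθ)

end

theorem privProfile_eq_tail_probs_general {Ω : Type*} [MeasurableSpace Ω]
    (μ : Measure Ω)
    (P Q : Measure Ω) [IsProbabilityMeasure P] [IsProbabilityMeasure Q]
    (f g : Ω → ℝ) (hf : Measurable f) (hg : Measurable g)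
    (hP : P = μ.withDensity (fun θ => ENNReal.ofReal (f θ)))
    (hQ : Q = μ.withDensity (fun θ => ENNReal.ofReal (g θ)))
    (hac : ∀ᵐ θ ∂μ, (0 < f θ ↔ 0 < g θ))
    (ε : ℝ) :
    privProfile P Q ε
      = ((P.map (fun θ => Real.log (f θ / g θ))) (Set.Ioi ε)).toReal
        - Real.exp ε * ((Q.map (fun θ => Real.log (g θ / f θ))) (Set.Iio (-ε))).toReal := by
  have hPA : {θ | Real.exp ε * g θ < f θ} =ᵐ[P] (fun θ => Real.log (f θ / g θ)) ⁻¹' Ioi ε := by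
    filter_upwards [hP ▸ ae_pos_and_pos_withDensity_ofReal hf hac] with θ ⟨hfθ, hgθ⟩
    exact propext (Real.lt_log_div_iff hfθ hgθ ε).symm
  have hQA : {θ | Real.exp ε * g θ < f θ} =ᵐ[Q] (fun θ => Real.log (g θ / f θ)) ⁻¹' Iio (-ε) := by
    filter_upwards [hQ ▸ ae_pos_and_pos_withDensity_ofReal hg (hac.mono fun _ => Iff.symm)]
      with θ ⟨hgθ, hfθ⟩
    exact propext (Real.log_div_lt_neg_iff hfθ hgθ ε).symm
  rw [Measure.map_apply (by fun_prop) measurableSet_Ioi,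
    Measure.map_apply (by fun_prop) measurableSet_Iio, ← measure_congr hPA, ← measure_congr hQA]
  subst hP hQ
  exact privProfile_withDensity_ofReal hf hg ε

theorem privProfile_eq_tail_probs {Ω : Type*} [MeasurableSpace Ω]
    (μ : Measure Ω) [SigmaFinite μ]
    (P Q : Measure Ω) [IsProbabilityMeasure P] [IsProbabilityMeasure Q]
    (f g : Ω → ℝ) (hf : Measurable f) (hg : Measurable g)
    (hf0 : 0 ≤ f) (hg0 : 0 ≤ g)
    (hP : P = μ.withDensity (fun θ => ENNReal.ofReal (f θ)))
    (hQ : Q = μ.withDensity (fun θ => ENNReal.ofReal (g θ)))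
    (hac : ∀ᵐ θ ∂μ, (0 < f θ ↔ 0 < g θ))
    (ε : ℝ) :
    privProfile P Q ε
      = ((P.map (fun θ => Real.log (f θ / g θ))) (Set.Ioi ε)).toReal
        - Real.exp ε * ((Q.map (fun θ => Real.log (g θ / f θ))) (Set.Iio (-ε))).toReal :=
  privProfile_eq_tail_probs_general μ P Q f g hf hg hP hQ hac ε
end

section
/- Fix ε > 0 and δ ∈ [0,1], and let P = M_RR^{ε,δ}(0) and Q = M_RR^{ε,δ}(1). Then for every t ∈ ℝ, δ_{P|Q}(t) = δ_{Q|P}(t), and this common value equals δ if t > ε; equals 1 − (1−δ)(e^t + 1)/(e^ε + 1) if −ε < t ≤ ε; and equals 1 − e^t(1−δ) if t ≤ −ε. -/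
open MeasureTheory

/-- Output distribution of the randomized response mechanism `M_RR^{ε,δ}` on input `0`.
The output space is `Bool × Bool` where the first component encodes the bit `0`/`1`
and the second component encodes `⊥`/`⊤` (as `false`/`true`). -/
noncomputable def MRR0 (ε δ : ℝ) : Measure (Bool × Bool) :=
  ENNReal.ofReal δ • Measure.dirac (false, false)
    + ENNReal.ofReal ((1 - δ) * Real.exp ε / (Real.exp ε + 1)) • Measure.dirac (false, true)
    + ENNReal.ofReal ((1 - δ) / (Real.exp ε + 1)) • Measure.dirac (true, true)

/-- Output distribution of the randomized response mechanism `M_RR^{ε,δ}` on input `1`. -/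
noncomputable def MRR1 (ε δ : ℝ) : Measure (Bool × Bool) :=
  ENNReal.ofReal ((1 - δ) / (Real.exp ε + 1)) • Measure.dirac (false, true)
    + ENNReal.ofReal ((1 - δ) * Real.exp ε / (Real.exp ε + 1)) • Measure.dirac (true, true)
    + ENNReal.ofReal δ • Measure.dirac (true, false)

/-! On a finite space the supremum defining the privacy profile is attained at the set of points
where `P {x} > e^t Q {x}`, so `δ_{P|Q}(t) = ∑ₓ (P {x} - e^t Q {x})⁺`. Flipping the output bit is a
measurable involution exchanging `M_RR(0)` and `M_RR(1)`, and the profile is invariant under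
pushing both measures forward along a measurable equivalence; this gives the symmetry. For
randomized response the sum has two terms whose sign depends on `t`, namely
`(1 - δ)/(e^ε + 1) · (e^ε - e^t)` and `(1 - δ)/(e^ε + 1) · (1 - e^(t + ε))`. -/

open Real

theorem privProfile_map {Ω Ω' : Type*} [MeasurableSpace Ω] [MeasurableSpace Ω']
    (e : Ω ≃ᵐ Ω') (P Q : Measure Ω) (t : ℝ) :
    privProfile (P.map e) (Q.map e) t = privProfile P Q t := by
  have hsurj : Function.Surjective fun S : {S : Set Ω' // MeasurableSet S} =>
      (⟨e ⁻¹' S.1, e.measurable S.2⟩ : {S : Set Ω // MeasurableSet S}) := fun S =>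
    ⟨⟨e.symm ⁻¹' S.1, e.symm.measurable S.2⟩, Subtype.ext (by simp [Set.preimage_preimage])⟩
  simp only [privProfile, e.map_apply]
  exact hsurj.iSup_comp (fun S => (P S.1).toReal - exp t * (Q S.1).toReal)

theorem privProfile_eq_sum_max {Ω : Type*} [Fintype Ω] [MeasurableSpace Ω]
    [MeasurableSingletonClass Ω] (P Q : Measure Ω) [IsFiniteMeasure P] [IsFiniteMeasure Q]
    (t : ℝ) : privProfile P Q t = ∑ x, max 0 (P.real {x} - exp t * Q.real {x}) := by
  set f : Ω → ℝ := fun x => P.real {x} - exp t * Q.real {x}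
  have hset : ∀ s : Finset Ω, P.real s - exp t * Q.real s = ∑ x ∈ s, f x := by
    intro s
    simp only [f, Finset.sum_sub_distrib, ← Finset.mul_sum, sum_measureReal_singleton]
  have hle : ∀ S : Set Ω, P.real S - exp t * Q.real S ≤ ∑ x, max 0 (f x) := by
    intro S
    rw [← S.toFinite.coe_toFinset, hset]
    calc ∑ x ∈ S.toFinite.toFinset, f x ≤ ∑ x ∈ S.toFinite.toFinset, max 0 (f x) :=
          Finset.sum_le_sum fun x _ => le_max_right _ _
      _ ≤ ∑ x, max 0 (f x) :=
          Finset.sum_le_sum_of_subset_of_nonneg (Finset.subset_univ _) fun x _ _ => le_max_left _ _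
  have hattain : P.real ↑(Finset.univ.filter fun x => 0 < f x)
      - exp t * Q.real ↑(Finset.univ.filter fun x => 0 < f x) = ∑ x, max 0 (f x) := by
    rw [hset, Finset.sum_filter]
    refine Finset.sum_congr rfl fun x _ => ?_
    split_ifs with h
    · exact (max_eq_right h.le).symm
    · exact (max_eq_left (not_lt.mp h)).symm
  simp only [privProfile, ← measureReal_def]
  have : Nonempty {S : Set Ω // MeasurableSet S} := ⟨⟨∅, .empty⟩⟩
  refine le_antisymm (ciSup_le fun S => hle S.1) ?_
  rw [← hattain]
  exact le_ciSup (f := fun S : {S : Set Ω // MeasurableSet S} => P.real S.1 - exp t * Q.real S.1)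
    ⟨_, Set.forall_mem_range.2 fun S => hle S.1⟩ ⟨_, MeasurableSet.of_discrete⟩

instance (ε δ : ℝ) : IsFiniteMeasure (MRR0 ε δ) := ⟨by simp [MRR0]⟩

instance (ε δ : ℝ) : IsFiniteMeasure (MRR1 ε δ) := ⟨by simp [MRR1]⟩

def flipBit : Bool × Bool ≃ᵐ Bool × Bool :=
  MeasurableEquiv.ofInvolutive (fun p => (!p.1, p.2)) (fun p => by simp) .of_discrete

@[simp] theorem flipBit_apply (a b : Bool) : flipBit (a, b) = (!a, b) := rfl

theorem map_flipBit_MRR0 (ε δ : ℝ) : (MRR0 ε δ).map flipBit = MRR1 ε δ := by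
  simp only [MRR0, MRR1, Measure.map_add _ _ flipBit.measurable, Measure.map_smul,
    Measure.map_dirac' flipBit.measurable, flipBit_apply, Bool.not_false, Bool.not_true]
  abel

theorem map_flipBit_MRR1 (ε δ : ℝ) : (MRR1 ε δ).map flipBit = MRR0 ε δ :=
  ((MeasurableEquiv.map_apply_eq_iff_map_symm_apply_eq flipBit).1 (map_flipBit_MRR0 ε δ)).symm

theorem privProfile_MRR1_MRR0 (ε δ t : ℝ) :
    privProfile (MRR1 ε δ) (MRR0 ε δ) t = privProfile (MRR0 ε δ) (MRR1 ε δ) t := by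
  rw [← privProfile_map flipBit, map_flipBit_MRR1, map_flipBit_MRR0]

theorem privProfile_MRR0_MRR1 {δ : ℝ} (hδ0 : 0 ≤ δ) (hδ1 : δ ≤ 1) (ε t : ℝ) :
    privProfile (MRR0 ε δ) (MRR1 ε δ) t =
      δ + (1 - δ) / (exp ε + 1) * (max 0 (exp ε - exp t) + max 0 (1 - exp (t + ε))) := by
  have hE : 0 < exp ε + 1 := by positivity
  have hu : 0 ≤ (1 - δ) / (exp ε + 1) := div_nonneg (by linarith) hE.le
  have huE : 0 ≤ (1 - δ) * exp ε / (exp ε + 1) := div_nonneg (by positivity) hE.le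
  rw [privProfile_eq_sum_max]
  simp only [Fintype.sum_prod_type, Fintype.sum_bool, MRR0, MRR1, measureReal_def,
    Measure.coe_add, Measure.coe_smul, Pi.add_apply, Pi.smul_apply, smul_eq_mul,
    Measure.dirac_apply', MeasurableSet.singleton, Set.mem_singleton_iff, Prod.mk.injEq,
    Bool.false_eq_true, Bool.true_eq_false, and_true, and_false, not_false_eq_true,
    Set.indicator_of_mem, Set.indicator_of_notMem, Pi.one_apply, mul_one, mul_zero, add_zero,
    zero_add, ENNReal.toReal_ofReal hu, ENNReal.toReal_ofReal huE, ENNReal.toReal_ofReal hδ0,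
    ENNReal.toReal_zero, zero_sub, sub_zero, sup_of_le_right hδ0]
  have hneg : max 0 (-(exp t * δ)) = 0 := max_eq_left (neg_nonpos.2 (by positivity))
  rw [hneg, mul_add, mul_max_of_nonneg _ _ hu, mul_max_of_nonneg _ _ hu, mul_zero, exp_add]
  ring_nf

theorem rr_privacy_profile (ε δ : ℝ) (hε : 0 < ε) (hδ : δ ∈ Set.Icc (0 : ℝ) 1) (t : ℝ) :
    privProfile (MRR0 ε δ) (MRR1 ε δ) t = privProfile (MRR1 ε δ) (MRR0 ε δ) t ∧
    privProfile (MRR0 ε δ) (MRR1 ε δ) t =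
      (if ε < t then δ
       else if -ε < t then 1 - (1 - δ) * (Real.exp t + 1) / (Real.exp ε + 1)
       else 1 - Real.exp t * (1 - δ)) := by
  obtain ⟨hδ0, hδ1⟩ := hδ
  refine ⟨(privProfile_MRR1_MRR0 ε δ t).symm, ?_⟩
  rw [privProfile_MRR0_MRR1 hδ0 hδ1]
  split_ifs with hεt htε
  · have h₁ : exp ε - exp t ≤ 0 := sub_nonpos.2 (exp_le_exp.2 hεt.le)
    have h₂ : 1 - exp (t + ε) ≤ 0 := sub_nonpos.2 (one_le_exp (by linarith))
    rw [max_eq_left h₁, max_eq_left h₂]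
    ring
  · have h₁ : 0 ≤ exp ε - exp t := sub_nonneg.2 (exp_le_exp.2 (not_lt.1 hεt))
    have h₂ : 1 - exp (t + ε) ≤ 0 := sub_nonpos.2 (one_le_exp (by linarith))
    rw [max_eq_right h₁, max_eq_left h₂]
    field_simp
    ring
  · have h₁ : 0 ≤ exp ε - exp t := sub_nonneg.2 (exp_le_exp.2 (by linarith [not_lt.1 htε]))
    have h₂ : 0 ≤ 1 - exp (t + ε) := sub_nonneg.2 (exp_le_one_iff.2 (by linarith [not_lt.1 htε]))
    rw [max_eq_right h₁, max_eq_right h₂, exp_add]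
    field_simp
    ring
end

section
/- Let (P₁, Q₁) and (P₂, Q₂) be two pairs of probability measures, each pair mutually absolutely continuous. If δ_{P₁|Q₁}(ε) ≤ δ_{P₂|Q₂}(ε) for all ε ∈ ℝ, then for every real q > 1 such that both functions t ↦ e^{(q−1)t} δ_{P₁|Q₁}(t) and t ↦ e^{(q−1)t} δ_{P₂|Q₂}(t) are integrable on ℝ, one has R_q(P₁‖Q₁) ≤ R_q(P₂‖Q₂). -/
/-!
For densities `p, q` the privacy profile is `δ(ε) = ∫ (p - e^ε q)⁺ dμ`, the supremum being
attained on `{p > e^ε q}`. For `a, b > 0` an elementary computation gives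
`r (r - 1) ∫ e^{(r-1)t} (a - e^t b)⁺ dt = a^r b^{1-r}`, so by Tonelli
`E_r(P‖Q) = r (r - 1) ∫ e^{(r-1)t} δ(t) dt`: the Rényi moment is a monotone functional of
the profile. Taking `S = Ω` in the supremum gives `δ(t) ≥ 1 - e^t`, whence `E_r(P₁‖Q₁) ≥ 1`,
and the logarithm can be applied to `E_r(P₁‖Q₁) ≤ E_r(P₂‖Q₂)`.
-/

open MeasureTheory

open Real Set
open scoped ENNReal

-- `ENNReal.ofReal` truncates at `0`: the integrand is `e^{(r-1)t} (a - e^t b)⁺`.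
theorem ofReal_mul_lintegral_exp_mul_sub_eq {r a b : ℝ} (hr : 1 < r) (ha : 0 ≤ a) (hb : 0 ≤ b)
    (hab : 0 < a → 0 < b) :
    ENNReal.ofReal (r * (r - 1)) * ∫⁻ t, ENNReal.ofReal (exp ((r - 1) * t) * (a - exp t * b))
      = ENNReal.ofReal (a ^ r * b ^ (1 - r)) := by
  have hr₀ : 0 < r := by linarith
  have hr₁ : 0 < r - 1 := by linarith
  rcases ha.eq_or_lt with rfl | ha
  · have hzero : ∀ t, ENNReal.ofReal (exp ((r - 1) * t) * (0 - exp t * b)) = 0 := fun t =>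
      ENNReal.ofReal_eq_zero.2 (mul_nonpos_of_nonneg_of_nonpos (exp_pos _).le
        (by nlinarith [exp_pos t]))
    rw [lintegral_congr hzero, lintegral_zero, mul_zero, zero_rpow hr₀.ne', zero_mul,
      ENNReal.ofReal_zero]
  have hbpos := hab ha
  -- the integrand vanishes beyond the point `c` where `e^c * b = a`
  set c := log (a / b)
  have ha_eq : a = b * exp c := by rw [exp_log (div_pos ha hbpos)]; field_simp
  have hle : ∀ t, 0 ≤ a - exp t * b ↔ t ≤ c := fun t => by
    rw [ha_eq, sub_nonneg, mul_comm, mul_le_mul_iff_right₀ hbpos, exp_le_exp]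
  have hsupp : (Function.support fun t => ENNReal.ofReal (exp ((r - 1) * t) * (a - exp t * b)))
      ⊆ Iic c := by
    intro t ht
    by_contra htc
    exact ht (ENNReal.ofReal_eq_zero.2 (mul_nonpos_of_nonneg_of_nonpos (exp_pos _).le
      (not_le.1 (mt (hle t).1 htc)).le))
  have hexp :
      ∀ t, exp ((r - 1) * t) * (a - exp t * b) = a * exp ((r - 1) * t) - b * exp (r * t) :=
    fun t => by rw [show r * t = (r - 1) * t + t by ring, exp_add]; ring
  have hi₁ := (integrableOn_exp_mul_Iic hr₁ c).const_mul a
  have hi₀ := (integrableOn_exp_mul_Iic hr₀ c).const_mul b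
  have hint : IntegrableOn (fun t => exp ((r - 1) * t) * (a - exp t * b)) (Iic c) := by
    simp_rw [hexp]
    exact hi₁.sub hi₀
  have hval :
      ∫ t in Iic c, exp ((r - 1) * t) * (a - exp t * b) = b * exp (r * c) / (r * (r - 1)) := by
    simp_rw [hexp]
    rw [integral_sub hi₁ hi₀, integral_const_mul, integral_const_mul,
      integral_exp_mul_Iic hr₁, integral_exp_mul_Iic hr₀, ha_eq,
      show r * c = c + (r - 1) * c by ring, exp_add]
    field_simp
    ring
  have hrpow : a ^ r * b ^ (1 - r) = b * exp (r * c) := by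
    rw [ha_eq, mul_rpow hbpos.le (exp_pos c).le, ← exp_mul, mul_right_comm, ← rpow_add hbpos,
      add_sub_cancel, rpow_one, mul_comm c]
  rw [← setLIntegral_eq_of_support_subset hsupp, ← ofReal_integral_eq_lintegral_ofReal hint
    (ae_restrict_of_forall_mem measurableSet_Iic fun t ht =>
      mul_nonneg (exp_pos _).le ((hle t).2 ht)),
    hval, hrpow, ← ENNReal.ofReal_mul (by positivity), mul_div_cancel₀ _ (by positivity)]

section Profile

variable {Ω : Type*} [MeasurableSpace Ω]

theorem le_privProfile (P Q : Measure Ω) [IsFiniteMeasure P] {S : Set Ω}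
    (hS : MeasurableSet S) (ε : ℝ) :
    (P S).toReal - exp ε * (Q S).toReal ≤ privProfile P Q ε := by
  refine le_ciSup (f := fun S : {S : Set Ω // MeasurableSet S} =>
    (P S.1).toReal - exp ε * (Q S.1).toReal) ?_ ⟨S, hS⟩
  refine ⟨(P univ).toReal, ?_⟩
  rintro _ ⟨T, rfl⟩
  have hQ : 0 ≤ exp ε * (Q T.1).toReal := by positivity
  have hP : (P T.1).toReal ≤ (P univ).toReal :=
    ENNReal.toReal_mono (measure_ne_top P univ) (measure_mono (subset_univ _))
  dsimp only
  linarith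

theorem one_sub_exp_le_privProfile (P Q : Measure Ω) [IsProbabilityMeasure P]
    [IsProbabilityMeasure Q] (ε : ℝ) : 1 - exp ε ≤ privProfile P Q ε := by
  simpa using le_privProfile P Q MeasurableSet.univ ε

theorem one_le_ofReal_mul_lintegral_exp_mul_privProfile
    (P Q : Measure Ω) [IsProbabilityMeasure P] [IsProbabilityMeasure Q] {r : ℝ} (hr : 1 < r) :
    1 ≤ ENNReal.ofReal (r * (r - 1)) *
      ∫⁻ t, ENNReal.ofReal (exp ((r - 1) * t) * privProfile P Q t) := by
  calc (1 : ℝ≥0∞)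
      = ENNReal.ofReal (r * (r - 1)) *
          ∫⁻ t, ENNReal.ofReal (exp ((r - 1) * t) * (1 - exp t * 1)) := by
        rw [ofReal_mul_lintegral_exp_mul_sub_eq hr zero_le_one zero_le_one fun _ => one_pos,
          one_rpow, one_rpow, mul_one, ENNReal.ofReal_one]
    _ ≤ _ := by
        gcongr with t
        rw [mul_one]
        exact one_sub_exp_le_privProfile P Q t

variable {μ : Measure Ω} {f g : Ω → ℝ}

theorem toReal_withDensity_ofReal_apply (hf : Measurable f) (hf0 : 0 ≤ f) {S : Set Ω}
    (hS : MeasurableSet S) :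
    (μ.withDensity (fun θ => ENNReal.ofReal (f θ)) S).toReal = ∫ θ in S, f θ ∂μ := by
  rw [withDensity_apply _ hS,
    integral_eq_lintegral_of_nonneg_ae (.of_forall hf0) hf.aestronglyMeasurable]

theorem integrable_of_isFiniteMeasure_withDensity_ofReal (hf : Measurable f) (hf0 : 0 ≤ f)
    [IsFiniteMeasure (μ.withDensity fun θ => ENNReal.ofReal (f θ))] : Integrable f μ := by
  refine ⟨hf.aestronglyMeasurable, (hasFiniteIntegral_iff_ofReal (.of_forall hf0)).2 ?_⟩
  rw [← setLIntegral_univ, ← withDensity_apply _ .univ]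
  exact measure_lt_top _ _

theorem privProfile_withDensity (hf : Measurable f) (hg : Measurable g) (hf0 : 0 ≤ f)
    (hg0 : 0 ≤ g) [IsFiniteMeasure (μ.withDensity fun θ => ENNReal.ofReal (f θ))]
    [IsFiniteMeasure (μ.withDensity fun θ => ENNReal.ofReal (g θ))] (ε : ℝ) :
    privProfile (μ.withDensity fun θ => ENNReal.ofReal (f θ))
        (μ.withDensity fun θ => ENNReal.ofReal (g θ)) ε
      = ∫ θ, max (f θ - exp ε * g θ) 0 ∂μ := by
  have hfi := integrable_of_isFiniteMeasure_withDensity_ofReal (μ := μ) hf hf0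
  have hgi := integrable_of_isFiniteMeasure_withDensity_ofReal (μ := μ) hg hg0
  have hi : Integrable (fun θ => f θ - exp ε * g θ) μ := hfi.sub (hgi.const_mul _)
  have hset : ∀ S, MeasurableSet S →
      (μ.withDensity (fun θ => ENNReal.ofReal (f θ)) S).toReal
        - exp ε * (μ.withDensity (fun θ => ENNReal.ofReal (g θ)) S).toReal
        = ∫ θ in S, (f θ - exp ε * g θ) ∂μ := by
    intro S hS
    rw [toReal_withDensity_ofReal_apply hf hf0 hS, toReal_withDensity_ofReal_apply hg hg0 hS,
      integral_sub hfi.restrict (hgi.restrict.const_mul _), integral_const_mul]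
  set Spos := {θ | 0 < f θ - exp ε * g θ}
  have hSpos : MeasurableSet Spos := measurableSet_lt measurable_const (by fun_prop)
  refine le_antisymm (ciSup_le fun S => ?_) ?_
  · rw [hset S.1 S.2, ← integral_indicator S.2]
    refine integral_mono (hi.indicator S.2) hi.pos_part fun θ => ?_
    by_cases hθ : θ ∈ S.1 <;> simp [hθ]
  · calc ∫ θ, max (f θ - exp ε * g θ) 0 ∂μ
        = ∫ θ in Spos, (f θ - exp ε * g θ) ∂μ := by
          rw [← integral_indicator hSpos]
          congr 1 with θ
          by_cases hθ : θ ∈ Spos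
          · rw [indicator_of_mem hθ, max_eq_left (le_of_lt hθ)]
          · rw [indicator_of_notMem hθ, max_eq_right (not_lt.1 hθ)]
      _ ≤ _ := (hset Spos hSpos).symm.trans_le (le_privProfile _ _ hSpos ε)

theorem lintegral_rpow_mul_rpow_eq_ofReal_mul_lintegral_privProfile [SFinite μ]
    (hf : Measurable f) (hg : Measurable g) (hf0 : 0 ≤ f) (hg0 : 0 ≤ g)
    [IsFiniteMeasure (μ.withDensity fun θ => ENNReal.ofReal (f θ))]
    [IsFiniteMeasure (μ.withDensity fun θ => ENNReal.ofReal (g θ))]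
    (hac : ∀ᵐ θ ∂μ, 0 < f θ → 0 < g θ) {r : ℝ} (hr : 1 < r) :
    ∫⁻ θ, ENNReal.ofReal (f θ ^ r * g θ ^ (1 - r)) ∂μ
      = ENNReal.ofReal (r * (r - 1)) * ∫⁻ t, ENNReal.ofReal (exp ((r - 1) * t) *
          privProfile (μ.withDensity fun θ => ENNReal.ofReal (f θ))
            (μ.withDensity fun θ => ENNReal.ofReal (g θ)) t) := by
  have hfi := integrable_of_isFiniteMeasure_withDensity_ofReal (μ := μ) hf hf0
  have hgi := integrable_of_isFiniteMeasure_withDensity_ofReal (μ := μ) hg hg0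
  have hprofile : ∀ t, ENNReal.ofReal (exp ((r - 1) * t) *
        privProfile (μ.withDensity fun θ => ENNReal.ofReal (f θ))
          (μ.withDensity fun θ => ENNReal.ofReal (g θ)) t)
      = ∫⁻ θ, ENNReal.ofReal (exp ((r - 1) * t) * (f θ - exp t * g θ)) ∂μ := by
    intro t
    have hi : Integrable (fun θ => f θ - exp t * g θ) μ := hfi.sub (hgi.const_mul _)
    rw [privProfile_withDensity hf hg hf0 hg0, ← integral_const_mul,
      ofReal_integral_eq_lintegral_ofReal (hi.pos_part.const_mul _)
        (.of_forall fun θ => mul_nonneg (exp_pos _).le (le_max_right _ _))]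
    congr 1 with θ
    rw [mul_max_of_nonneg _ _ (exp_pos _).le, mul_zero, ENNReal.ofReal_max, ENNReal.ofReal_zero,
      max_eq_left zero_le]
  have hmeas : Measurable (Function.uncurry fun θ t =>
      ENNReal.ofReal (exp ((r - 1) * t) * (f θ - exp t * g θ))) := by
    fun_prop
  calc ∫⁻ θ, ENNReal.ofReal (f θ ^ r * g θ ^ (1 - r)) ∂μ
      = ∫⁻ θ, ENNReal.ofReal (r * (r - 1)) *
          (∫⁻ t, ENNReal.ofReal (exp ((r - 1) * t) * (f θ - exp t * g θ))) ∂μ :=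
        lintegral_congr_ae <| hac.mono fun θ hθ =>
          (ofReal_mul_lintegral_exp_mul_sub_eq hr (hf0 θ) (hg0 θ) hθ).symm
    _ = _ := by
        rw [lintegral_const_mul' _ _ ENNReal.ofReal_ne_top,
          lintegral_lintegral_swap hmeas.aemeasurable]
        simp_rw [hprofile]

end Profile

theorem renyi_dominance_of_profile_dominance_general
    {Ω₁ Ω₂ : Type*} [MeasurableSpace Ω₁] [MeasurableSpace Ω₂]
    (μ₁ : Measure Ω₁) [SigmaFinite μ₁] (μ₂ : Measure Ω₂) [SigmaFinite μ₂]
    (P₁ Q₁ : Measure Ω₁) [IsProbabilityMeasure P₁] [IsProbabilityMeasure Q₁]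
    (P₂ Q₂ : Measure Ω₂) [IsProbabilityMeasure P₂] [IsProbabilityMeasure Q₂]
    (f₁ g₁ : Ω₁ → ℝ) (f₂ g₂ : Ω₂ → ℝ)
    (hf₁ : Measurable f₁) (hg₁ : Measurable g₁)
    (hf₂ : Measurable f₂) (hg₂ : Measurable g₂)
    (hf₁0 : 0 ≤ f₁) (hg₁0 : 0 ≤ g₁) (hf₂0 : 0 ≤ f₂) (hg₂0 : 0 ≤ g₂)
    (hP₁ : P₁ = μ₁.withDensity (fun θ => ENNReal.ofReal (f₁ θ)))
    (hQ₁ : Q₁ = μ₁.withDensity (fun θ => ENNReal.ofReal (g₁ θ)))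
    (hP₂ : P₂ = μ₂.withDensity (fun θ => ENNReal.ofReal (f₂ θ)))
    (hQ₂ : Q₂ = μ₂.withDensity (fun θ => ENNReal.ofReal (g₂ θ)))
    (hac₁ : ∀ᵐ θ ∂μ₁, (0 < f₁ θ ↔ 0 < g₁ θ))
    (hac₂ : ∀ᵐ θ ∂μ₂, (0 < f₂ θ ↔ 0 < g₂ θ))
    (hdom : ∀ ε : ℝ, privProfile P₁ Q₁ ε ≤ privProfile P₂ Q₂ ε)
    (r : ℝ) (hr : 1 < r)
    (hint₂ : Integrable (fun t => Real.exp ((r - 1) * t) * privProfile P₂ Q₂ t)) :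
    (1 / (r - 1)) * Real.log (∫ θ, f₁ θ ^ r * g₁ θ ^ (1 - r) ∂μ₁)
      ≤ (1 / (r - 1)) * Real.log (∫ θ, f₂ θ ^ r * g₂ θ ^ (1 - r) ∂μ₂) := by
  subst hP₁ hQ₁ hP₂ hQ₂
  have key₁ := lintegral_rpow_mul_rpow_eq_ofReal_mul_lintegral_privProfile hf₁ hg₁ hf₁0 hg₁0
    (hac₁.mono fun _ h => h.1) hr
  have key₂ := lintegral_rpow_mul_rpow_eq_ofReal_mul_lintegral_privProfile hf₂ hg₂ hf₂0 hg₂0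
    (hac₂.mono fun _ h => h.1) hr
  have hle : ∫⁻ θ, ENNReal.ofReal (f₁ θ ^ r * g₁ θ ^ (1 - r)) ∂μ₁
      ≤ ∫⁻ θ, ENNReal.ofReal (f₂ θ ^ r * g₂ θ ^ (1 - r)) ∂μ₂ := by
    rw [key₁, key₂]
    gcongr with t
    exact hdom t
  have hfin : ∫⁻ θ, ENNReal.ofReal (f₂ θ ^ r * g₂ θ ^ (1 - r)) ∂μ₂ ≠ ∞ := by
    rw [key₂]
    exact ENNReal.mul_ne_top ENNReal.ofReal_ne_top hint₂.lintegral_lt_top.ne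
  have hone : 1 ≤ ∫⁻ θ, ENNReal.ofReal (f₁ θ ^ r * g₁ θ ^ (1 - r)) ∂μ₁ :=
    key₁ ▸ one_le_ofReal_mul_lintegral_exp_mul_privProfile _ _ hr
  rw [integral_eq_lintegral_of_nonneg_ae
      (.of_forall fun θ => mul_nonneg (rpow_nonneg (hf₁0 θ) _) (rpow_nonneg (hg₁0 θ) _))
      (by fun_prop),
    integral_eq_lintegral_of_nonneg_ae
      (.of_forall fun θ => mul_nonneg (rpow_nonneg (hf₂0 θ) _) (rpow_nonneg (hg₂0 θ) _))
      (by fun_prop)]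
  refine mul_le_mul_of_nonneg_left (log_le_log ?_ (ENNReal.toReal_mono hfin hle))
    (one_div_nonneg.2 (sub_nonneg.2 hr.le))
  exact ENNReal.toReal_pos (one_pos.trans_le hone).ne' (hle.trans_lt hfin.lt_top).ne

theorem renyi_dominance_of_profile_dominance
    {Ω₁ Ω₂ : Type*} [MeasurableSpace Ω₁] [MeasurableSpace Ω₂]
    (μ₁ : Measure Ω₁) [SigmaFinite μ₁] (μ₂ : Measure Ω₂) [SigmaFinite μ₂]
    (P₁ Q₁ : Measure Ω₁) [IsProbabilityMeasure P₁] [IsProbabilityMeasure Q₁]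
    (P₂ Q₂ : Measure Ω₂) [IsProbabilityMeasure P₂] [IsProbabilityMeasure Q₂]
    (f₁ g₁ : Ω₁ → ℝ) (f₂ g₂ : Ω₂ → ℝ)
    (hf₁ : Measurable f₁) (hg₁ : Measurable g₁)
    (hf₂ : Measurable f₂) (hg₂ : Measurable g₂)
    (hf₁0 : 0 ≤ f₁) (hg₁0 : 0 ≤ g₁) (hf₂0 : 0 ≤ f₂) (hg₂0 : 0 ≤ g₂)
    (hP₁ : P₁ = μ₁.withDensity (fun θ => ENNReal.ofReal (f₁ θ)))
    (hQ₁ : Q₁ = μ₁.withDensity (fun θ => ENNReal.ofReal (g₁ θ)))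
    (hP₂ : P₂ = μ₂.withDensity (fun θ => ENNReal.ofReal (f₂ θ)))
    (hQ₂ : Q₂ = μ₂.withDensity (fun θ => ENNReal.ofReal (g₂ θ)))
    (hac₁ : ∀ᵐ θ ∂μ₁, (0 < f₁ θ ↔ 0 < g₁ θ))
    (hac₂ : ∀ᵐ θ ∂μ₂, (0 < f₂ θ ↔ 0 < g₂ θ))
    (hdom : ∀ ε : ℝ, privProfile P₁ Q₁ ε ≤ privProfile P₂ Q₂ ε)
    (r : ℝ) (hr : 1 < r)
    (hint₁ : Integrable (fun t => Real.exp ((r - 1) * t) * privProfile P₁ Q₁ t))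
    (hint₂ : Integrable (fun t => Real.exp ((r - 1) * t) * privProfile P₂ Q₂ t)) :
    (1 / (r - 1)) * Real.log (∫ θ, f₁ θ ^ r * g₁ θ ^ (1 - r) ∂μ₁)
      ≤ (1 / (r - 1)) * Real.log (∫ θ, f₂ θ ^ r * g₂ θ ^ (1 - r) ∂μ₂) :=
  renyi_dominance_of_profile_dominance_general μ₁ μ₂ P₁ Q₁ P₂ Q₂ f₁ g₁ f₂ g₂ hf₁ hg₁ hf₂ hg₂ hf₁0
    hg₁0 hf₂0 hg₂0 hP₁ hQ₁ hP₂ hQ₂ hac₁ hac₂ hdom r hr hint₂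
end

section
/- For every ε > 0 and every real q > 1, the Rényi divergence of the (ε,0)-randomized response is dominated by that of the Gaussian pair with κ = ε²/2; concretely, (1/(q−1)) · log( (e^{(1−q)ε} + e^{qε})/(1 + e^ε) ) ≤ q · ε²/2. -/
/-!
Multiplying numerator and denominator by `exp (-ε / 2)` turns the ratio into
`cosh ((r - 1/2) ε) / cosh (ε / 2)`. On `[0, ∞)` the derivative `tanh` of `log ∘ cosh` is at most
the derivative `x` of `x ^ 2 / 2`, so the logarithm of this ratio is at most
`(((r - 1/2) ε) ^ 2 - (ε / 2) ^ 2) / 2 = r (r - 1) ε ^ 2 / 2`.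
-/

open Real Set

namespace Real

lemma sinh_le_mul_cosh {x : ℝ} (hx : 0 ≤ x) : sinh x ≤ x * cosh x := by
  have hderiv (y : ℝ) : HasDerivAt (fun t ↦ t * cosh t - sinh t) (y * sinh y) y :=
    (((hasDerivAt_id y).mul (hasDerivAt_cosh y)).sub (hasDerivAt_sinh y)).congr_deriv (by simp)
  have hmono : MonotoneOn (fun t ↦ t * cosh t - sinh t) (Ici 0) :=
    monotoneOn_of_hasDerivWithinAt_nonneg (convex_Ici 0) (by fun_prop)
      (fun y _ ↦ (hderiv y).hasDerivWithinAt)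
      (fun y hy ↦ by
        rw [interior_Ici] at hy
        exact mul_nonneg hy.le (sinh_nonneg_iff.2 hy.le))
  simpa using hmono self_mem_Ici hx hx

lemma tanh_le_self {x : ℝ} (hx : 0 ≤ x) : tanh x ≤ x := by
  rw [tanh_eq_sinh_div_cosh, div_le_iff₀ (cosh_pos x)]
  exact sinh_le_mul_cosh hx

lemma monotoneOn_sq_div_two_sub_log_cosh :
    MonotoneOn (fun x ↦ x ^ 2 / 2 - log (cosh x)) (Ici 0) := by
  have hderiv (x : ℝ) :
      HasDerivAt (fun x ↦ x ^ 2 / 2 - log (cosh x)) (x - tanh x) x :=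
    (((hasDerivAt_pow 2 x).div_const 2).sub ((hasDerivAt_cosh x).log (cosh_pos x).ne')).congr_deriv
      (by rw [tanh_eq_sinh_div_cosh]; ring)
  exact monotoneOn_of_hasDerivWithinAt_nonneg (convex_Ici 0)
    (fun x _ ↦ (hderiv x).continuousAt.continuousWithinAt)
    (fun x _ ↦ (hderiv x).hasDerivWithinAt)
    (fun x hx ↦ by
      rw [interior_Ici] at hx
      exact sub_nonneg.2 (tanh_le_self hx.le))

lemma log_cosh_div_cosh_le {x y : ℝ} (hx : 0 ≤ x) (hxy : x ≤ y) :
    log (cosh y / cosh x) ≤ (y ^ 2 - x ^ 2) / 2 := by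
  have h := monotoneOn_sq_div_two_sub_log_cosh hx (hx.trans hxy) hxy
  rw [log_div (cosh_pos y).ne' (cosh_pos x).ne']
  dsimp only at h
  linarith

lemma exp_add_exp_div_one_add_exp (r ε : ℝ) :
    (exp ((1 - r) * ε) + exp (r * ε)) / (1 + exp ε) = cosh ((r - 1 / 2) * ε) / cosh (ε / 2) := by
  have hnum : exp ((1 - r) * ε) + exp (r * ε) = 2 * cosh ((r - 1 / 2) * ε) * exp (ε / 2) := by
    rw [cosh_eq, mul_div_cancel₀ _ two_ne_zero, add_mul, ← exp_add, ← exp_add]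
    ring_nf
  have hden : 1 + exp ε = 2 * cosh (ε / 2) * exp (ε / 2) := by
    rw [cosh_eq, mul_div_cancel₀ _ two_ne_zero, add_mul, ← exp_add, ← exp_add, add_halves,
      neg_add_cancel, exp_zero, add_comm]
  rw [hnum, hden, mul_div_mul_right _ _ (exp_pos _).ne', mul_div_mul_left _ _ two_ne_zero]

end Real

theorem rr_renyi_le_gaussian_renyi (ε : ℝ) (hε : 0 < ε) (r : ℝ) (hr : 1 < r) :
    (1 / (r - 1)) * Real.log ((Real.exp ((1 - r) * ε) + Real.exp (r * ε)) / (1 + Real.exp ε))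
      ≤ r * ε ^ 2 / 2 := by
  have hr' : 0 < r - 1 := sub_pos.2 hr
  rw [exp_add_exp_div_one_add_exp, one_div, inv_mul_le_iff₀ hr']
  calc log (cosh ((r - 1 / 2) * ε) / cosh (ε / 2))
      ≤ (((r - 1 / 2) * ε) ^ 2 - (ε / 2) ^ 2) / 2 :=
        log_cosh_div_cosh_le (by positivity) (by nlinarith)
    _ = (r - 1) * (r * ε ^ 2 / 2) := by ring
end

section
/- Let d ≥ 1, σ > 0, and let μ, μ′ ∈ ℝ^d with μ ≠ μ′. Let P = N(μ, σ²I_d) and Q = N(μ′, σ²I_d) be the corresponding multivariate Gaussian measures, and set κ = ‖μ − μ′‖₂²/(2σ²). Then (a) R_q(P‖Q) = κq for all real q > 1, and (b) for all ε ∈ ℝ, δ_{P|Q}(ε) = Φ̄((ε − κ)/√(2κ)) − e^ε · Φ̄((ε + κ)/√(2κ)), where Φ̄(t) := Pr_{G∼N(0,1)}[G > t] is the standard normal survival function. -/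
open MeasureTheory ProbabilityTheory

/-- Density (w.r.t. Lebesgue measure) of the Gaussian `N(μ, σ²I_d)` on `ℝ^d`. -/
noncomputable def gaussDen (d : ℕ) (σ : ℝ) (μ : EuclideanSpace ℝ (Fin d))
    (x : EuclideanSpace ℝ (Fin d)) : ℝ :=
  (2 * Real.pi * σ ^ 2) ^ (-(d : ℝ) / 2) * Real.exp (-‖x - μ‖ ^ 2 / (2 * σ ^ 2))

/-- Standard normal survival function `Φ̄(t) = Pr_{G ∼ N(0,1)}[G > t]`. -/
noncomputable def stdNormalSurvival (t : ℝ) : ℝ :=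
  ((gaussianReal 0 1) (Set.Ioi t)).toReal

/-! Both densities factor into one-dimensional Gaussian densities, so integrals against them split
over coordinates; by rotation invariance this computes the Gaussian mass of every half-space.

(a) Completing the square, `p ^ r * q ^ (1 - r)` is `exp (r (r - 1) κ)` times the Gaussian density
centred at `r • μ + (1 - r) • μ'`, which integrates to one.

(b) For densities, `P S - e^ε Q S = ∫_S (p - e^ε q)` is maximised by the likelihood-ratio set
`{p > e^ε q}`. For two Gaussians with equal covariance the log-likelihood ratio is affine, so this
set is a half-space orthogonal to `μ - μ'`, at distance `(σ² ε ∓ ‖μ - μ'‖² / 2) / ‖μ - μ'‖` from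
`μ` resp. `μ'`. -/

open scoped RealInnerProductSpace

section PrivacyProfile

variable {α : Type*} [MeasurableSpace α] {ν : Measure α}

lemma toReal_withDensity_ofReal_apply_s11 {p : α → ℝ} (hp : Integrable p ν) (hp0 : 0 ≤ p)
    {T : Set α} (hT : MeasurableSet T) :
    ((ν.withDensity fun x => ENNReal.ofReal (p x)) T).toReal = ∫ x in T, p x ∂ν := by
  rw [withDensity_apply _ hT, ← ofReal_integral_eq_lintegral_ofReal hp.restrict (ae_of_all _ hp0),
    ENNReal.toReal_ofReal (integral_nonneg hp0)]

lemma setIntegral_le_pos {g : α → ℝ} (hg : Integrable g ν)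
    (hpos : MeasurableSet {x | 0 < g x}) {T : Set α} (hT : MeasurableSet T) :
    ∫ x in T, g x ∂ν ≤ ∫ x in {x | 0 < g x}, g x ∂ν := by
  rw [← integral_indicator hT, ← integral_indicator hpos]
  refine integral_mono (hg.indicator hT) (hg.indicator hpos) fun x => ?_
  by_cases hxT : x ∈ T <;> by_cases hx : 0 < g x <;> simp [hxT, hx, le_of_lt, not_lt.mp]

lemma privProfile_withDensity_s11 {p q : α → ℝ} (hp : Integrable p ν) (hq : Integrable q ν)
    (hp0 : 0 ≤ p) (hq0 : 0 ≤ q) (ε : ℝ) (hS : MeasurableSet {x | Real.exp ε * q x < p x}) :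
    privProfile (ν.withDensity fun x => ENNReal.ofReal (p x))
        (ν.withDensity fun x => ENNReal.ofReal (q x)) ε
      = (∫ x in {x | Real.exp ε * q x < p x}, p x ∂ν)
        - Real.exp ε * ∫ x in {x | Real.exp ε * q x < p x}, q x ∂ν := by
  set g := fun x => p x - Real.exp ε * q x
  have hg : Integrable g ν := hp.sub (hq.const_mul _)
  have hS' : {x | Real.exp ε * q x < p x} = {x | 0 < g x} := by simp [g]
  have hval : ∀ T, MeasurableSet T →
      ((ν.withDensity fun x => ENNReal.ofReal (p x)) T).toReal
        - Real.exp ε * ((ν.withDensity fun x => ENNReal.ofReal (q x)) T).toReal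
        = ∫ x in T, g x ∂ν := fun T hT => by
    rw [toReal_withDensity_ofReal_apply_s11 hp hp0 hT, toReal_withDensity_ofReal_apply_s11 hq hq0 hT,
      integral_sub hp.restrict (hq.restrict.const_mul _), integral_const_mul]
  rw [← integral_const_mul, ← integral_sub hp.restrict (hq.restrict.const_mul _)]
  refine IsGreatest.csSup_eq ⟨⟨⟨_, hS⟩, hval _ hS⟩, ?_⟩
  rintro _ ⟨⟨T, hT⟩, rfl⟩
  refine (hval T hT).trans_le ?_
  rw [hS'] at hS ⊢
  exact setIntegral_le_pos hg hS hT

section EuclideanProduct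

variable {ι : Type*} [Fintype ι]

lemma integrable_euclideanSpace_prod {f : ι → ℝ → ℝ} (hf : ∀ i, Integrable (f i)) :
    Integrable fun x : EuclideanSpace ℝ ι => ∏ i, f i (x i) :=
  ((EuclideanSpace.volume_preserving_symm_measurableEquiv_toLp ι).integrable_comp_emb
    (MeasurableEquiv.measurableEmbedding _)).mpr (Integrable.fintype_prod hf)

lemma integral_euclideanSpace_prod (f : ι → ℝ → ℝ) :
    ∫ x : EuclideanSpace ℝ ι, ∏ i, f i (x i) = ∏ i, ∫ z, f i z := by
  rw [← integral_fintype_prod_eq_prod f]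
  exact (EuclideanSpace.volume_preserving_symm_measurableEquiv_toLp ι).integral_comp'
    fun y => ∏ i, f i (y i)

end EuclideanProduct

lemma exists_orthonormalBasis_apply_eq {ι E : Type*} [Fintype ι] [NormedAddCommGroup E]
    [InnerProductSpace ℝ E] [FiniteDimensional ℝ E] (hcard : Module.finrank ℝ E = Fintype.card ι)
    {u : E} (hu : ‖u‖ = 1) (i : ι) : ∃ b : OrthonormalBasis ι ℝ E, b i = u := by
  have hon : Orthonormal ℝ (({i} : Set ι).domRestrict fun _ => u) :=
    ⟨fun _ => hu, fun j k hjk => absurd (Subsingleton.elim j k) hjk⟩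
  obtain ⟨b, hb⟩ := hon.exists_orthonormalBasis_extension_of_card_eq hcard
  exact ⟨b, hb i rfl⟩

lemma norm_sub_sq_affine_combination {E : Type*} [NormedAddCommGroup E] [InnerProductSpace ℝ E]
    (r : ℝ) (x a b : E) :
    r * ‖x - a‖ ^ 2 + (1 - r) * ‖x - b‖ ^ 2
      = ‖x - (r • a + (1 - r) • b)‖ ^ 2 + r * (1 - r) * ‖a - b‖ ^ 2 := by
  have hx : x - (r • a + (1 - r) • b) = r • (x - a) + (1 - r) • (x - b) := by module
  have hab : a - b = (x - b) - (x - a) := by abel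
  rw [hx, hab, norm_add_sq_real, norm_sub_sq_real (x - b), norm_smul, norm_smul,
    real_inner_smul_left, real_inner_smul_right, real_inner_comm (x - a)]
  simp only [mul_pow, Real.norm_eq_abs, sq_abs]
  ring

lemma gaussianReal_Ioi_toReal {σ : ℝ} (hσ : 0 < σ) (m c : ℝ) :
    (gaussianReal m (‖σ‖₊ ^ 2) (Set.Ioi c)).toReal
      = stdNormalSurvival ((c - m) / σ) := by
  have hmap : (gaussianReal 0 1).map (fun z => σ * z + m) = gaussianReal m (‖σ‖₊ ^ 2) := by
    rw [show (fun z => σ * z + m) = (· + m) ∘ (σ * ·) from rfl,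
      ← Measure.map_map (by fun_prop) (by fun_prop), gaussianReal_map_const_mul,
      gaussianReal_map_add_const]
    congr 1
    · ring
    · ext; simp
  have hpre : (fun z => σ * z + m) ⁻¹' Set.Ioi c = Set.Ioi ((c - m) / σ) := by
    ext z
    simp [div_lt_iff₀ hσ, sub_lt_iff_lt_add, mul_comm]
  rw [← hmap, Measure.map_apply (by fun_prop) measurableSet_Ioi, hpre, stdNormalSurvival]

section GaussianDensity

variable {d : ℕ} {σ : ℝ}

lemma gaussDen_eq_prod (hσ : σ ≠ 0) (m x : EuclideanSpace ℝ (Fin d)) :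
    gaussDen d σ m x = ∏ i, gaussianPDFReal (m i) (‖σ‖₊ ^ 2) (x i) := by
  have hpos : 0 < 2 * Real.pi * σ ^ 2 := by positivity
  simp only [gaussDen, gaussianPDFReal, Finset.prod_mul_distrib,
    Finset.prod_const, Finset.card_univ, Fintype.card_fin, ← Real.exp_sum,
    ← Finset.sum_div, Finset.sum_neg_distrib, EuclideanSpace.norm_sq_eq, NNReal.coe_pow,
    coe_nnnorm, Real.norm_eq_abs, sq_abs, PiLp.sub_apply]
  congr 1
  rw [Real.sqrt_eq_rpow, ← Real.rpow_neg hpos.le, ← Real.rpow_natCast _ d, ← Real.rpow_mul hpos.le]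
  ring_nf

lemma gaussDen_pos (hσ : σ ≠ 0) (m x : EuclideanSpace ℝ (Fin d)) : 0 < gaussDen d σ m x := by
  have : 0 < 2 * Real.pi * σ ^ 2 := by positivity
  unfold gaussDen
  positivity

lemma integrable_gaussDen (hσ : σ ≠ 0) (m : EuclideanSpace ℝ (Fin d)) :
    Integrable (gaussDen d σ m) := by
  simp_rw [funext (gaussDen_eq_prod hσ m)]
  exact integrable_euclideanSpace_prod fun i => integrable_gaussianPDFReal _ _

lemma integral_gaussDen (hσ : σ ≠ 0) (m : EuclideanSpace ℝ (Fin d)) :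
    ∫ x, gaussDen d σ m x = 1 := by
  simp_rw [gaussDen_eq_prod hσ m, integral_euclideanSpace_prod,
    integral_gaussianPDFReal_eq_one _ (pow_ne_zero 2 (nnnorm_ne_zero_iff.mpr hσ)),
    Finset.prod_const_one]

lemma gaussDen_linearIsometryEquiv (e : EuclideanSpace ℝ (Fin d) ≃ₗᵢ[ℝ] EuclideanSpace ℝ (Fin d))
    (m x : EuclideanSpace ℝ (Fin d)) : gaussDen d σ m (e x) = gaussDen d σ (e.symm m) x := by
  rw [gaussDen, gaussDen, ← e.norm_map (x - e.symm m), map_sub, e.apply_symm_apply]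

lemma setIntegral_gaussDen_coord_gt (hσ : 0 < σ) (m : EuclideanSpace ℝ (Fin d)) (i : Fin d)
    (c : ℝ) :
    ∫ x in {x | c < x i}, gaussDen d σ m x = stdNormalSurvival ((c - m i) / σ) := by
  classical
  set f : Fin d → ℝ → ℝ := fun j z =>
    (if j = i then (Set.Ioi c).indicator 1 z else 1) * gaussianPDFReal (m j) (‖σ‖₊ ^ 2) z
  have hf : ∀ x : EuclideanSpace ℝ (Fin d),
      {x | c < x i}.indicator (gaussDen d σ m) x = ∏ j, f j (x j) := by
    intro x
    rw [Finset.prod_mul_distrib, Finset.prod_ite_eq', if_pos (Finset.mem_univ _),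
      ← gaussDen_eq_prod hσ.ne']
    by_cases hx : c < x i <;> simp [hx]
  have hvar : ‖σ‖₊ ^ 2 ≠ 0 := pow_ne_zero 2 (nnnorm_ne_zero_iff.mpr hσ.ne')
  rw [← integral_indicator (measurableSet_lt measurable_const (by fun_prop)),
    integral_congr_ae (ae_of_all _ hf), integral_euclideanSpace_prod,
    Finset.prod_eq_single i (fun j _ hj => by simp [f, hj, integral_gaussianPDFReal_eq_one _ hvar])
      (by simp)]
  simp only [f, if_true, ← Set.indicator_mul_left, Pi.one_apply, one_mul]
  rw [integral_indicator measurableSet_Ioi, ← gaussianReal_Ioi_toReal hσ,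
    gaussianReal_apply_eq_integral _ hvar, ENNReal.toReal_ofReal
      (setIntegral_nonneg measurableSet_Ioi fun z _ => gaussianPDFReal_nonneg _ _ _)]

lemma setIntegral_gaussDen_inner_gt (hσ : 0 < σ) (m : EuclideanSpace ℝ (Fin d))
    {v : EuclideanSpace ℝ (Fin d)} (hv : v ≠ 0) (c : ℝ) :
    ∫ x in {x | c < ⟪x, v⟫}, gaussDen d σ m x
      = stdNormalSurvival ((c - ⟪v, m⟫) / (σ * ‖v‖)) := by
  have hv' : 0 < ‖v‖ := norm_pos_iff.mpr hv
  obtain ⟨i⟩ : Nonempty (Fin d) := by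
    by_contra h
    have := not_nonempty_iff.mp h
    exact hv (Subsingleton.elim v 0)
  obtain ⟨b, hb⟩ := exists_orthonormalBasis_apply_eq (u := ‖v‖⁻¹ • v) (by simp)
    (by rw [norm_smul, norm_inv, norm_norm, inv_mul_cancel₀ hv'.ne']) i
  have hpre : b.repr.symm ⁻¹' {x | c < ⟪x, v⟫} = {y | c / ‖v‖ < y i} := by
    ext y
    have : ⟪b.repr.symm y, v⟫ = ‖v‖ * y i := by
      conv_lhs => rw [← smul_inv_smul₀ hv'.ne' v, ← hb]
      rw [real_inner_smul_right, real_inner_comm, ← b.repr_apply_apply, b.repr.apply_symm_apply]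
    simp [this, div_lt_iff₀ hv', mul_comm]
  have hmi : b.repr m i = ⟪v, m⟫ / ‖v‖ := by
    rw [b.repr_apply_apply, hb, real_inner_smul_left, inv_mul_eq_div]
  rw [← b.measurePreserving_repr_symm.setIntegral_preimage_emb
    b.repr.symm.toHomeomorph.measurableEmbedding, hpre]
  simp_rw [gaussDen_linearIsometryEquiv, LinearIsometryEquiv.symm_symm]
  rw [setIntegral_gaussDen_coord_gt hσ, hmi, ← sub_div, div_div, mul_comm]

lemma gaussDen_rpow_mul_rpow (hσ : σ ≠ 0) (r : ℝ) (μ μ' x : EuclideanSpace ℝ (Fin d)) :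
    gaussDen d σ μ x ^ r * gaussDen d σ μ' x ^ (1 - r)
      = Real.exp (r * (r - 1) * (‖μ - μ'‖ ^ 2 / (2 * σ ^ 2)))
        * gaussDen d σ (r • μ + (1 - r) • μ') x := by
  simp only [gaussDen]
  set C := (2 * Real.pi * σ ^ 2) ^ (-(d : ℝ) / 2)
  have hC : 0 < C := by positivity
  have hCr : C ^ r * C ^ (1 - r) = C := by rw [← Real.rpow_add hC, add_sub_cancel, Real.rpow_one]
  have hexp := norm_sub_sq_affine_combination r x μ μ'
  rw [Real.mul_rpow hC.le (Real.exp_pos _).le, Real.mul_rpow hC.le (Real.exp_pos _).le,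
    ← Real.exp_mul, ← Real.exp_mul, mul_mul_mul_comm, hCr, ← Real.exp_add, mul_left_comm,
    ← Real.exp_add]
  congr 2
  field_simp
  linear_combination -hexp

lemma integral_gaussDen_rpow_mul_rpow (hσ : σ ≠ 0) (r : ℝ) (μ μ' : EuclideanSpace ℝ (Fin d)) :
    ∫ x, gaussDen d σ μ x ^ r * gaussDen d σ μ' x ^ (1 - r)
      = Real.exp (r * (r - 1) * (‖μ - μ'‖ ^ 2 / (2 * σ ^ 2))) := by
  simp_rw [gaussDen_rpow_mul_rpow hσ, integral_const_mul, integral_gaussDen hσ, mul_one]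

lemma gaussDen_eq_exp_mul_gaussDen (hσ : σ ≠ 0) (μ μ' x : EuclideanSpace ℝ (Fin d)) :
    gaussDen d σ μ x
      = Real.exp ((⟪x, μ - μ'⟫ - (‖μ‖ ^ 2 - ‖μ'‖ ^ 2) / 2) / σ ^ 2) * gaussDen d σ μ' x := by
  simp only [gaussDen]
  rw [mul_left_comm, ← Real.exp_add, norm_sub_sq_real x μ, norm_sub_sq_real x μ', inner_sub_right]
  congr 2
  field_simp
  ring

lemma setOf_exp_mul_gaussDen_lt_gaussDen (hσ : σ ≠ 0) (μ μ' : EuclideanSpace ℝ (Fin d)) (ε : ℝ) :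
    {x | Real.exp ε * gaussDen d σ μ' x < gaussDen d σ μ x}
      = {x | σ ^ 2 * ε + (‖μ‖ ^ 2 - ‖μ'‖ ^ 2) / 2 < ⟪x, μ - μ'⟫} := by
  ext x
  simp only [Set.mem_ofPred_eq]
  rw [gaussDen_eq_exp_mul_gaussDen hσ μ μ', mul_lt_mul_iff_left₀ (gaussDen_pos hσ μ' x),
    Real.exp_lt_exp, lt_div_iff₀ (by positivity)]
  constructor <;> intro h <;> linarith

end GaussianDensity

theorem gaussian_privacy_general (d : ℕ) (σ : ℝ) (hσ : 0 < σ)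
    (μ μ' : EuclideanSpace ℝ (Fin d)) (hμ : μ ≠ μ') :
    (∀ r : ℝ, 1 < r →
      (1 / (r - 1)) * Real.log (∫ x, gaussDen d σ μ x ^ r * gaussDen d σ μ' x ^ (1 - r))
        = (‖μ - μ'‖ ^ 2 / (2 * σ ^ 2)) * r) ∧
    (∀ ε : ℝ,
      privProfile
          (volume.withDensity (fun x => ENNReal.ofReal (gaussDen d σ μ x)))
          (volume.withDensity (fun x => ENNReal.ofReal (gaussDen d σ μ' x))) ε
        = stdNormalSurvival
            ((ε - ‖μ - μ'‖ ^ 2 / (2 * σ ^ 2)) / Real.sqrt (2 * (‖μ - μ'‖ ^ 2 / (2 * σ ^ 2))))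
          - Real.exp ε * stdNormalSurvival
            ((ε + ‖μ - μ'‖ ^ 2 / (2 * σ ^ 2)) / Real.sqrt (2 * (‖μ - μ'‖ ^ 2 / (2 * σ ^ 2))))) := by
  refine ⟨fun r hr => ?_, fun ε => ?_⟩
  · rw [integral_gaussDen_rpow_mul_rpow hσ.ne', Real.log_exp]
    field_simp [sub_ne_zero.mpr hr.ne']
  have hδ : 0 < ‖μ - μ'‖ := norm_pos_iff.mpr (sub_ne_zero.mpr hμ)
  have hsqrt : Real.sqrt (2 * (‖μ - μ'‖ ^ 2 / (2 * σ ^ 2))) = ‖μ - μ'‖ / σ := by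
    rw [← Real.sqrt_sq (div_pos hδ hσ).le]
    congr 1
    field_simp
  have hS := setOf_exp_mul_gaussDen_lt_gaussDen hσ.ne' μ μ' ε
  rw [privProfile_withDensity_s11 (integrable_gaussDen hσ.ne' μ) (integrable_gaussDen hσ.ne' μ')
      (fun x => (gaussDen_pos hσ.ne' μ x).le) (fun x => (gaussDen_pos hσ.ne' μ' x).le) ε
      (hS ▸ measurableSet_lt measurable_const (by fun_prop)), hS,
    setIntegral_gaussDen_inner_gt hσ _ (sub_ne_zero.mpr hμ),
    setIntegral_gaussDen_inner_gt hσ _ (sub_ne_zero.mpr hμ), hsqrt]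
  have hnorm := norm_sub_sq_real μ μ'
  congr 2
  · field_simp
    rw [inner_sub_left, real_inner_self_eq_norm_sq, real_inner_comm μ]
    linear_combination hnorm
  · congr 1
    field_simp
    rw [inner_sub_left, real_inner_self_eq_norm_sq]
    linear_combination -hnorm

theorem gaussian_privacy (d : ℕ) (hd : 1 ≤ d) (σ : ℝ) (hσ : 0 < σ)
    (μ μ' : EuclideanSpace ℝ (Fin d)) (hμ : μ ≠ μ') :
    (∀ r : ℝ, 1 < r →
      (1 / (r - 1)) * Real.log (∫ x, gaussDen d σ μ x ^ r * gaussDen d σ μ' x ^ (1 - r))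
        = (‖μ - μ'‖ ^ 2 / (2 * σ ^ 2)) * r) ∧
    (∀ ε : ℝ,
      privProfile
          (volume.withDensity (fun x => ENNReal.ofReal (gaussDen d σ μ x)))
          (volume.withDensity (fun x => ENNReal.ofReal (gaussDen d σ μ' x))) ε
        = stdNormalSurvival
            ((ε - ‖μ - μ'‖ ^ 2 / (2 * σ ^ 2)) / Real.sqrt (2 * (‖μ - μ'‖ ^ 2 / (2 * σ ^ 2))))
          - Real.exp ε * stdNormalSurvival
            ((ε + ‖μ - μ'‖ ^ 2 / (2 * σ ^ 2)) / Real.sqrt (2 * (‖μ - μ'‖ ^ 2 / (2 * σ ^ 2))))) :=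
  gaussian_privacy_general d σ hσ μ μ' hμ
end PrivacyProfile
end

section
/- Fix k ≥ 1, εᵢ ≥ 0 and δᵢ ∈ [0,1] for i = 1,…,k. Let P_{1:k} and Q_{1:k} be joint probability measures on Ω₁ × ⋯ × Ω_k built adaptively from initial laws and Markov kernels such that for every i and every history x_{<i}, the conditional output distributions satisfy δ_{P_i^{x_{<i}}|Q_i^{x_{<i}}}(εᵢ) ≤ δᵢ and δ_{Q_i^{x_{<i}}|P_i^{x_{<i}}}(εᵢ) ≤ δᵢ. Define δ^{⊗0}(t) := max(0, 1 − e^t) and recursively δ^{⊗l}(t) := δ_l + ((1−δ_l)/(e^{ε_l}+1)) · [ e^{ε_l} · δ^{⊗(l−1)}(t − ε_l) + δ^{⊗(l−1)}(t + ε_l) ]. Then for every t ∈ ℝ, δ_{P_{1:k}|Q_{1:k}}(t) ≤ δ^{⊗k}(t). -/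
open MeasureTheory ProbabilityTheory

/-- The joint law of `n` adaptively composed mechanisms: `κ i` gives the law of the
`i`-th output (0-indexed) conditioned on the history of the preceding `i` outputs;
in particular `κ 0` is the initial law. -/
noncomputable def adaptiveJoint {Ω : Type*} [MeasurableSpace Ω]
    (κ : (n : ℕ) → Kernel (Fin n → Ω) Ω) : (n : ℕ) → Measure (Fin n → Ω)
  | 0 => Measure.dirac (fun i => i.elim0)
  | n + 1 =>
      ((adaptiveJoint κ n) ⊗ₘ (κ n)).map (fun p : (Fin n → Ω) × Ω => Fin.snoc p.1 p.2)

/-- The recursively composed privacy-profile bound `δ^{⊗l}`, where the `l`-fold bound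
uses the parameters `ε (l-1), δ (l-1)` of the last mechanism (0-indexed). -/
noncomputable def composedBound (ε δ : ℕ → ℝ) : ℕ → ℝ → ℝ
  | 0, t => max 0 (1 - Real.exp t)
  | l + 1, t =>
      δ l + ((1 - δ l) / (Real.exp (ε l) + 1)) *
        (Real.exp (ε l) * composedBound ε δ l (t - ε l) + composedBound ε δ l (t + ε l))

/-!
Induct on `k`, peeling off the last mechanism. For a measurable `S` in the product, the
sections of `S` have probabilities `a x` and `b x` under the last two kernels, and the
two-sided `(ε, δ)` constraints say exactly that the test `(a x, b x)` is dominated by a test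
on the four-point randomized-response pair. Integrating over the history, the gap
`P_{1:k}(S) - e^t Q_{1:k}(S)` is at most `δ` plus `c e^ε` times the gap of a `[0, 1]`-valued
test of the history at level `t - ε`, plus `c` times that of another at level `t + ε`, with
`c = (1 - δ) / (e^ε + 1)`. By the layer-cake formula such test gaps are bounded by the
privacy profile of the histories, and the induction hypothesis closes the recursion.
-/

open Set Real

section PrivProfile

variable {Ω : Type*} [MeasurableSpace Ω] {P Q : Measure Ω}

lemma privProfile_bddAbove [IsFiniteMeasure P] (ε : ℝ) :
    BddAbove (range fun S : {S : Set Ω // MeasurableSet S} =>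
      (P S.1).toReal - exp ε * (Q S.1).toReal) := by
  refine ⟨P.real univ, ?_⟩
  rintro _ ⟨S, rfl⟩
  have : 0 ≤ exp ε * Q.real S.1 := by positivity
  have : P.real S.1 ≤ P.real univ := measureReal_mono (subset_univ _)
  simp only [← measureReal_def]
  linarith

lemma measureReal_sub_le_privProfile [IsFiniteMeasure P] (ε : ℝ) {S : Set Ω}
    (hS : MeasurableSet S) : P.real S - exp ε * Q.real S ≤ privProfile P Q ε :=
  le_ciSup (privProfile_bddAbove ε) ⟨S, hS⟩

lemma privProfile_map_le [IsFiniteMeasure P] {Ω' : Type*} [MeasurableSpace Ω'] {f : Ω → Ω'}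
    (hf : Measurable f) (ε : ℝ) : privProfile (P.map f) (Q.map f) ε ≤ privProfile P Q ε := by
  refine ciSup_le fun ⟨S, hS⟩ => ?_
  simp only [← measureReal_def, map_measureReal_apply hf hS]
  exact measureReal_sub_le_privProfile ε (hf hS)

lemma privProfile_self_le [IsProbabilityMeasure P] (t : ℝ) :
    privProfile P P t ≤ max 0 (1 - exp t) := by
  refine ciSup_le fun ⟨S, _⟩ => ?_
  calc P.real S - exp t * P.real S = (1 - exp t) * P.real S := by ring
    _ ≤ max 0 (1 - exp t) * P.real S := by gcongr; exact le_max_right _ _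
    _ ≤ max 0 (1 - exp t) :=
        mul_le_of_le_one_right (le_max_left _ _) (measureReal_le_one (μ := P))

lemma integrable_of_mem_Icc [IsFiniteMeasure P] {f : Ω → ℝ} (hf : Measurable f)
    (hf01 : ∀ x, f x ∈ Icc 0 1) : Integrable f P :=
  .of_bound hf.aestronglyMeasurable 1 <| ae_of_all _ fun x => by
    rw [Real.norm_of_nonneg (hf01 x).1]; exact (hf01 x).2

lemma integral_eq_intervalIntegral_measureReal_lt [IsFiniteMeasure P] {f : Ω → ℝ}
    (hf : Measurable f) (hf01 : ∀ x, f x ∈ Icc 0 1) :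
    ∫ x, f x ∂P = ∫ u in (0 : ℝ)..1, P.real {x | u < f x} := by
  rw [(integrable_of_mem_Icc hf hf01).integral_eq_integral_meas_lt
    (ae_of_all _ fun x => (hf01 x).1), intervalIntegral.integral_of_le zero_le_one]
  refine setIntegral_eq_of_subset_of_forall_sdiff_eq_zero measurableSet_Ioi Ioc_subset_Ioi_self
    fun u hu => ?_
  have hu1 : 1 < u := (by simpa using hu.2 : 0 < u → 1 < u) hu.1
  have : {x | u < f x} = ∅ := eq_empty_of_forall_notMem fun x (hx : u < f x) => by
    linarith [(hf01 x).2]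
  simp [this]

/-- Layer cake: a `[0, 1]`-valued test is a mixture of indicators of measurable sets. -/
lemma integral_sub_exp_mul_integral_le_privProfile [IsFiniteMeasure P] [IsFiniteMeasure Q]
    {f : Ω → ℝ} (hf : Measurable f) (hf01 : ∀ x, f x ∈ Icc 0 1) (ε : ℝ) :
    ∫ x, f x ∂P - exp ε * ∫ x, f x ∂Q ≤ privProfile P Q ε := by
  have hint : ∀ μ : Measure Ω, IsFiniteMeasure μ →
      IntervalIntegrable (fun u => μ.real {x | u < f x}) volume 0 1 := fun μ _ =>
    Antitone.intervalIntegrable fun u v huv => measureReal_mono fun x hx => huv.trans_lt hx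
  rw [integral_eq_intervalIntegral_measureReal_lt hf hf01,
    integral_eq_intervalIntegral_measureReal_lt hf hf01,
    ← intervalIntegral.integral_const_mul, ← intervalIntegral.integral_sub (hint P ‹_›)
      ((hint Q ‹_›).const_mul _)]
  calc _ ≤ ∫ _ in (0 : ℝ)..1, privProfile P Q ε :=
        intervalIntegral.integral_mono_on zero_le_one
          ((hint P ‹_›).sub ((hint Q ‹_›).const_mul _)) intervalIntegrable_const fun u _ =>
          measureReal_sub_le_privProfile ε (hf measurableSet_Ioi)
    _ = privProfile P Q ε := by simp

end PrivProfile

/-- The fraction of an atom of mass `w` that a test must select to collect mass `s`. -/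
noncomputable def fillFraction (w s : ℝ) : ℝ := max 0 (min 1 (s / w))

lemma fillFraction_mem_Icc (w s : ℝ) : fillFraction w s ∈ Icc 0 1 :=
  ⟨le_max_left _ _, max_le zero_le_one (min_le_left _ _)⟩

lemma continuous_fillFraction (w : ℝ) : Continuous (fillFraction w) := by
  unfold fillFraction; fun_prop

lemma mul_fillFraction {w : ℝ} (hw : 0 ≤ w) (s : ℝ) :
    w * fillFraction w s = max 0 (min w s) := by
  rcases hw.eq_or_lt with rfl | hw
  · simp [fillFraction]
  · rw [fillFraction, mul_max_of_nonneg _ _ hw.le, mul_min_of_nonneg _ _ hw.le,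
      mul_div_cancel₀ _ hw.ne', mul_zero, mul_one]

/-- The randomized-response pair puts masses `(δ, c e^ε, c, 0)` and `(0, c, c e^ε, δ)` on four
atoms; the dominating test accepts the first atom and fractions `u`, `v` of the middle two. -/
lemma dominated_by_randomizedResponse {ε δ a b : ℝ} (hε : 0 ≤ ε) (hδ : δ ∈ Icc 0 1)
    (ha : a ≤ 1) (hb : 0 ≤ b) (h₁ : a - exp ε * b ≤ δ) (h₂ : 1 - b - exp ε * (1 - a) ≤ δ) :
    let c := (1 - δ) / (exp ε + 1)
    let u := fillFraction (c * exp ε) (a - δ)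
    let v := fillFraction c (a - δ - c * exp ε)
    a ≤ δ + c * (exp ε * u + v) ∧ c * (u + exp ε * v) ≤ b := by
  intro c u v
  have hE : 1 ≤ exp ε := one_le_exp hε
  have hc : c * (exp ε + 1) = 1 - δ := div_mul_cancel₀ _ (by positivity)
  have hc0 : 0 ≤ c := div_nonneg (by linarith [hδ.2]) (by positivity)
  have hu : c * exp ε * u = max 0 (min (c * exp ε) (a - δ)) := mul_fillFraction (by positivity) _
  have hv : c * v = max 0 (min c (a - δ - c * exp ε)) := mul_fillFraction hc0 _
  constructor
  · calc a ≤ δ + (max 0 (min (c * exp ε) (a - δ)) + max 0 (min c (a - δ - c * exp ε))) := by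
          simp only [max_def, min_def]; split_ifs <;> nlinarith
      _ = δ + c * (exp ε * u + v) := by rw [← hu, ← hv]; ring
  · have hEpos : 0 < exp ε := exp_pos ε
    calc c * (u + exp ε * v) = c * exp ε * u / exp ε + exp ε * (c * v) := by field_simp
      _ ≤ b := by
        rw [hu, hv]
        rcases le_total (a - δ) (c * exp ε) with hr | hr
        · have hv0 : max 0 (min c (a - δ - c * exp ε)) = 0 :=
            max_eq_left (min_le_of_right_le (by linarith))
          rw [hv0, mul_zero, add_zero, div_le_iff₀ hEpos]
          exact max_le (by positivity) (min_le_of_right_le (by linarith))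
        · rw [min_eq_left hr, max_eq_right (by positivity), mul_div_cancel_right₀ _ hEpos.ne']
          have hv_le : max 0 (min c (a - δ - c * exp ε)) ≤ a - δ - c * exp ε :=
            max_le (by linarith) (min_le_right _ _)
          have := congrArg (exp ε * ·) hc
          nlinarith

section Composition

variable {X Ω : Type*} [MeasurableSpace X] [MeasurableSpace Ω]

lemma measureReal_compProd {μ : Measure X} [SFinite μ] {κ : Kernel X Ω} [IsFiniteKernel κ]
    {s : Set (X × Ω)} (hs : MeasurableSet s) :
    (μ ⊗ₘ κ).real s = ∫ x, (κ x).real (Prod.mk x ⁻¹' s) ∂μ := by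
  rw [measureReal_def, Measure.compProd_apply hs, ← integral_toReal
    (Kernel.measurable_kernel_prodMk_left hs).aemeasurable
    (ae_of_all _ fun _ => measure_lt_top _ _)]
  rfl

lemma integral_sub_exp_mul_integral_le_of_dominated {P Q : Measure X} [IsProbabilityMeasure P]
    [IsProbabilityMeasure Q] {a b u v : X → ℝ} {c δ ε : ℝ} (hc : 0 ≤ c) (ha : Integrable a P)
    (hb : Integrable b Q) (hu : Measurable u) (hv : Measurable v) (hu01 : ∀ x, u x ∈ Icc 0 1)
    (hv01 : ∀ x, v x ∈ Icc 0 1) (hau : ∀ x, a x ≤ δ + c * (exp ε * u x + v x))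
    (hbu : ∀ x, c * (u x + exp ε * v x) ≤ b x) (t : ℝ) :
    ∫ x, a x ∂P - exp t * ∫ x, b x ∂Q ≤
      δ + c * (exp ε * privProfile P Q (t - ε) + privProfile P Q (t + ε)) := by
  have hu_int {μ : Measure X} [IsFiniteMeasure μ] : Integrable u μ := integrable_of_mem_Icc hu hu01
  have hv_int {μ : Measure X} [IsFiniteMeasure μ] : Integrable v μ := integrable_of_mem_Icc hv hv01
  have hP : ∫ x, a x ∂P ≤ δ + c * (exp ε * ∫ x, u x ∂P + ∫ x, v x ∂P) := by
    calc ∫ x, a x ∂P ≤ ∫ x, δ + c * (exp ε * u x + v x) ∂P :=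
          integral_mono ha (by fun_prop) hau
      _ = _ := by
        rw [integral_add (by fun_prop) (by fun_prop), integral_const_mul,
          integral_add (by fun_prop) (by fun_prop), integral_const_mul]
        simp
  have hQ : c * (∫ x, u x ∂Q + exp ε * ∫ x, v x ∂Q) ≤ ∫ x, b x ∂Q := by
    calc c * (∫ x, u x ∂Q + exp ε * ∫ x, v x ∂Q) = ∫ x, c * (u x + exp ε * v x) ∂Q := by
          rw [integral_const_mul, integral_add (by fun_prop) (by fun_prop), integral_const_mul]
      _ ≤ ∫ x, b x ∂Q := integral_mono (by fun_prop) hb hbu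
  have hu_le := integral_sub_exp_mul_integral_le_privProfile (P := P) (Q := Q) hu hu01 (t - ε)
  have hv_le := integral_sub_exp_mul_integral_le_privProfile (P := P) (Q := Q) hv hv01 (t + ε)
  calc ∫ x, a x ∂P - exp t * ∫ x, b x ∂Q
      ≤ δ + c * (exp ε * ∫ x, u x ∂P + ∫ x, v x ∂P)
          - exp t * (c * (∫ x, u x ∂Q + exp ε * ∫ x, v x ∂Q)) := by gcongr
    _ = δ + c * (exp ε * (∫ x, u x ∂P - exp (t - ε) * ∫ x, u x ∂Q)
          + (∫ x, v x ∂P - exp (t + ε) * ∫ x, v x ∂Q)) := by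
        rw [exp_sub, exp_add]; field_simp; ring
    _ ≤ δ + c * (exp ε * privProfile P Q (t - ε) + privProfile P Q (t + ε)) := by gcongr

lemma privProfile_compProd_le {P Q : Measure X} [IsProbabilityMeasure P] [IsProbabilityMeasure Q]
    {κ η : Kernel X Ω} [IsMarkovKernel κ] [IsMarkovKernel η] {ε δ : ℝ} (hε : 0 ≤ ε)
    (hδ : δ ∈ Icc 0 1) (hκη : ∀ x, privProfile (κ x) (η x) ε ≤ δ)
    (hηκ : ∀ x, privProfile (η x) (κ x) ε ≤ δ) (t : ℝ) :
    privProfile (P ⊗ₘ κ) (Q ⊗ₘ η) t ≤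
      δ + (1 - δ) / (exp ε + 1) * (exp ε * privProfile P Q (t - ε) + privProfile P Q (t + ε)) := by
  refine ciSup_le fun ⟨S, hS⟩ => ?_
  set c := (1 - δ) / (exp ε + 1)
  have ha : Measurable fun x => (κ x).real (Prod.mk x ⁻¹' S) :=
    (Kernel.measurable_kernel_prodMk_left hS).ennreal_toReal
  have hb : Measurable fun x => (η x).real (Prod.mk x ⁻¹' S) :=
    (Kernel.measurable_kernel_prodMk_left hS).ennreal_toReal
  have hSx (x : X) : MeasurableSet (Prod.mk x ⁻¹' S) := measurable_prodMk_left hS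
  have hdom (x : X) := dominated_by_randomizedResponse hε hδ measureReal_le_one measureReal_nonneg
    ((measureReal_sub_le_privProfile ε (hSx x)).trans (hκη x))
    (by simpa only [probReal_compl_eq_one_sub (hSx x)] using
      (measureReal_sub_le_privProfile ε (hSx x).compl).trans (hηκ x))
  change (P ⊗ₘ κ).real S - exp t * (Q ⊗ₘ η).real S ≤ _
  rw [measureReal_compProd hS, measureReal_compProd hS]
  exact integral_sub_exp_mul_integral_le_of_dominated
    (u := fun x => fillFraction (c * exp ε) ((κ x).real (Prod.mk x ⁻¹' S) - δ))
    (v := fun x => fillFraction c ((κ x).real (Prod.mk x ⁻¹' S) - δ - c * exp ε))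
    (div_nonneg (by linarith [hδ.2]) (by positivity))
    (integrable_of_mem_Icc ha fun _ => ⟨measureReal_nonneg, measureReal_le_one⟩)
    (integrable_of_mem_Icc hb fun _ => ⟨measureReal_nonneg, measureReal_le_one⟩)
    ((continuous_fillFraction _).measurable.comp (ha.sub_const δ))
    ((continuous_fillFraction _).measurable.comp ((ha.sub_const δ).sub_const _))
    (fun _ => fillFraction_mem_Icc _ _) (fun _ => fillFraction_mem_Icc _ _)
    (fun x => (hdom x).1) (fun x => (hdom x).2) t

end Composition

section Adaptive

variable {Ω : Type*} [MeasurableSpace Ω]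

lemma measurable_snoc {n : ℕ} :
    Measurable fun p : (Fin n → Ω) × Ω => (Fin.snoc p.1 p.2 : Fin (n + 1) → Ω) :=
  measurable_pi_lambda _ fun i => by
    induction i using Fin.lastCases <;> simp only [Fin.snoc_last, Fin.snoc_castSucc] <;> fun_prop

lemma isProbabilityMeasure_adaptiveJoint {κ : (n : ℕ) → Kernel (Fin n → Ω) Ω}
    (hκ : ∀ n, IsMarkovKernel (κ n)) (n : ℕ) : IsProbabilityMeasure (adaptiveJoint κ n) := by
  induction n with
  | zero => rw [adaptiveJoint]; infer_instance
  | succ n ih =>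
    rw [adaptiveJoint]
    exact Measure.isProbabilityMeasure_map measurable_snoc.aemeasurable

end Adaptive

theorem tight_adaptive_composition_general {Ω : Type*} [MeasurableSpace Ω]
    (k : ℕ) (ε δ : ℕ → ℝ)
    (hε : ∀ i, 0 ≤ ε i) (hδ : ∀ i, δ i ∈ Set.Icc (0 : ℝ) 1)
    (κP κQ : (n : ℕ) → Kernel (Fin n → Ω) Ω)
    (hP : ∀ n, IsMarkovKernel (κP n)) (hQ : ∀ n, IsMarkovKernel (κQ n))
    (hdom : ∀ n < k, ∀ x : Fin n → Ω,
      privProfile (κP n x) (κQ n x) (ε n) ≤ δ n ∧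
      privProfile (κQ n x) (κP n x) (ε n) ≤ δ n)
    (t : ℝ) :
    privProfile (adaptiveJoint κP k) (adaptiveJoint κQ k) t ≤ composedBound ε δ k t := by
  induction k generalizing t with
  | zero => exact privProfile_self_le (P := Measure.dirac _) t
  | succ k ih =>
    have := isProbabilityMeasure_adaptiveJoint hP k
    have := isProbabilityMeasure_adaptiveJoint hQ k
    have ih' := ih fun n hn => hdom n (hn.trans k.lt_succ_self)
    calc _ ≤ privProfile (adaptiveJoint κP k ⊗ₘ κP k) (adaptiveJoint κQ k ⊗ₘ κQ k) t :=
          privProfile_map_le measurable_snoc t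
      _ ≤ _ := privProfile_compProd_le (hε k) (hδ k) (fun x => (hdom k k.lt_succ_self x).1)
          (fun x => (hdom k k.lt_succ_self x).2) t
      _ ≤ composedBound ε δ (k + 1) t := by
          have : 0 ≤ 1 - δ k := by linarith [(hδ k).2]
          rw [composedBound]; gcongr <;> apply ih'

theorem tight_adaptive_composition {Ω : Type*} [MeasurableSpace Ω]
    (k : ℕ) (hk : 1 ≤ k) (ε δ : ℕ → ℝ)
    (hε : ∀ i, 0 ≤ ε i) (hδ : ∀ i, δ i ∈ Set.Icc (0 : ℝ) 1)
    (κP κQ : (n : ℕ) → Kernel (Fin n → Ω) Ω)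
    (hP : ∀ n, IsMarkovKernel (κP n)) (hQ : ∀ n, IsMarkovKernel (κQ n))
    (hdom : ∀ n < k, ∀ x : Fin n → Ω,
      privProfile (κP n x) (κQ n x) (ε n) ≤ δ n ∧
      privProfile (κQ n x) (κP n x) (ε n) ≤ δ n)
    (t : ℝ) :
    privProfile (adaptiveJoint κP k) (adaptiveJoint κQ k) t ≤ composedBound ε δ k t :=
  tight_adaptive_composition_general k ε δ hε hδ κP κQ hP hQ hdom t
end

section
/- Fix ε ≥ 0, δ ∈ [0,1], and k ≥ 1. Let δ^{⊗0}(t) := max(0, 1 − e^t) and recursively δ^{⊗l}(t) := δ + ((1−δ)/(e^{ε}+1)) · [ e^{ε} · δ^{⊗(l−1)}(t − ε) + δ^{⊗(l−1)}(t + ε) ]. Then for every t ∈ ℝ, δ^{⊗k}(t) = 1 − (1−δ)^k · ( 1 − E_{Y ∼ Binomial(k, e^ε/(1+e^ε))}[ max(0, 1 − e^{t − ε(2Y − k)}) ] ). -/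
/-! Peeling off the last of `k` independent coin flips: with `p = e^ε / (1 + e^ε)`, the
recursion for `δ^{⊗k}` is the law of total expectation for `Binomial(k, p)` conditioned on
its last trial, which shifts `t` by `-ε` on heads and by `+ε` on tails. The factors `1 - δ`
accumulate because `1 - δ^{⊗k}` is multiplied by `1 - δ` at each step. -/

open Finset

section BinomialSum

variable {R : Type*} [CommSemiring R]

/-- For `q = 1 - p` this is `E[f Y]` with `Y ∼ Binomial(k, p)`. -/
def binomialSum (p q : R) (k : ℕ) (f : ℕ → R) : R :=
  ∑ y ∈ range (k + 1), (k.choose y : R) * p ^ y * q ^ (k - y) * f y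

theorem binomialSum_zero (p q : R) (f : ℕ → R) : binomialSum p q 0 f = f 0 := by
  simp [binomialSum]

theorem binomialSum_succ (p q : R) (k : ℕ) (f : ℕ → R) :
    binomialSum p q (k + 1) f =
      p * binomialSum p q k (fun y => f (y + 1)) + q * binomialSum p q k f := by
  have hsplit := sum_choose_succ_mul (fun i j => p ^ i * q ^ j * f i) k
  simp only [← mul_assoc] at hsplit
  rw [binomialSum, hsplit, add_comm, binomialSum, binomialSum, mul_sum, mul_sum]
  congr 1
  · exact sum_congr rfl fun y _ => by ring
  · refine sum_congr rfl fun y hy => ?_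
    rw [Nat.sub_add_comm (Nat.lt_succ_iff.mp (mem_range.mp hy)), pow_succ]
    ring

end BinomialSum

theorem div_exp_add_one_mul_eq (c ε a b : ℝ) :
    c / (Real.exp ε + 1) * (Real.exp ε * a + b) =
      c * (Real.exp ε / (1 + Real.exp ε) * a + (1 - Real.exp ε / (1 + Real.exp ε)) * b) := by
  have : 1 + Real.exp ε ≠ 0 := by positivity
  field_simp
  ring

theorem composed_bound_closed_form_general (ε δ : ℝ) (k : ℕ) (t : ℝ) :
    composedBound (fun _ => ε) (fun _ => δ) k t
      = 1 - (1 - δ) ^ k *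
          (1 - ∑ y ∈ Finset.range (k + 1),
            (k.choose y : ℝ) * (Real.exp ε / (1 + Real.exp ε)) ^ y
              * (1 - Real.exp ε / (1 + Real.exp ε)) ^ (k - y)
              * max 0 (1 - Real.exp (t - ε * (2 * (y : ℝ) - (k : ℝ))))) := by
  set p := Real.exp ε / (1 + Real.exp ε)
  change _ = 1 - (1 - δ) ^ k *
    (1 - binomialSum p (1 - p) k fun y => max 0 (1 - Real.exp (t - ε * (2 * (y : ℝ) - k))))
  induction k generalizing t with
  | zero => simp [composedBound, binomialSum_zero]
  | succ k ih =>
    have heads : (fun y : ℕ => max 0 (1 - Real.exp (t - ε - ε * (2 * (y : ℝ) - k)))) =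
        fun y => max 0 (1 - Real.exp (t - ε * (2 * ((y + 1 : ℕ) : ℝ) - ((k + 1 : ℕ) : ℝ)))) := by
      funext y; push_cast; ring_nf
    have tails : (fun y : ℕ => max 0 (1 - Real.exp (t + ε - ε * (2 * (y : ℝ) - k)))) =
        fun y : ℕ => max 0 (1 - Real.exp (t - ε * (2 * (y : ℝ) - ((k + 1 : ℕ) : ℝ)))) := by
      funext y; push_cast; ring_nf
    rw [composedBound, div_exp_add_one_mul_eq, ih, ih, heads, tails, binomialSum_succ]
    ring

theorem composed_bound_closed_form (ε δ : ℝ) (hε : 0 ≤ ε) (hδ : δ ∈ Set.Icc (0 : ℝ) 1)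
    (k : ℕ) (hk : 1 ≤ k) (t : ℝ) :
    composedBound (fun _ => ε) (fun _ => δ) k t
      = 1 - (1 - δ) ^ k *
          (1 - ∑ y ∈ Finset.range (k + 1),
            (k.choose y : ℝ) * (Real.exp ε / (1 + Real.exp ε)) ^ y
              * (1 - Real.exp ε / (1 + Real.exp ε)) ^ (k - y)
              * max 0 (1 - Real.exp (t - ε * (2 * (y : ℝ) - (k : ℝ))))) :=
  composed_bound_closed_form_general ε δ k t
end

section
/- Let 0 < λ ≤ 1 and let P_IN and Q be probability measures on Ω, and set P := λ·P_IN + (1−λ)·Q (the output distribution under Poisson subsampling with rate λ). Then for every ε ∈ ℝ: if ε > log(1−λ), then δ_{P|Q}(ε) = λ · δ_{P_IN|Q}( log(1 + (e^ε − 1)/λ) ); and if ε ≤ log(1−λ), then δ_{P|Q}(ε) = 1 − e^ε. -/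
/-!
Writing `P := λ • P_IN + (1 - λ) • Q`, every set satisfies
`P(S) - e^ε Q(S) = λ (P_IN(S) - ((e^ε - (1 - λ)) / λ) Q(S))`.
If `e^ε > 1 - λ`, the coefficient `(e^ε - (1 - λ)) / λ = 1 + (e^ε - 1) / λ` is positive, hence of the
form `e^ε'`, and the supremum scales by `λ`. Otherwise `Q(S)` enters with a nonnegative coefficient,
so the supremum is attained at `S = Ω`, where it equals `1 - e^ε`.
-/

open MeasureTheory

lemma measureReal_ofReal_smul_add_ofReal_smul_apply {Ω : Type*} [MeasurableSpace Ω]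
    {a b : ℝ} (ha : 0 ≤ a) (hb : 0 ≤ b) (μ ν : Measure Ω) [IsFiniteMeasure μ]
    [IsFiniteMeasure ν] (S : Set Ω) :
    (ENNReal.ofReal a • μ + ENNReal.ofReal b • ν).real S = a * μ.real S + b * ν.real S := by
  rw [measureReal_add_apply (by simp [ENNReal.mul_eq_top]) (by simp [ENNReal.mul_eq_top]),
    measureReal_ennreal_smul_apply, measureReal_ennreal_smul_apply,
    ENNReal.toReal_ofReal ha, ENNReal.toReal_ofReal hb]

namespace privProfile

variable {Ω : Type*} [MeasurableSpace Ω]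

lemma eq_iSup_measureReal (P Q : Measure Ω) (ε : ℝ) :
    privProfile P Q ε = ⨆ S : {S : Set Ω // MeasurableSet S}, (P.real S - Real.exp ε * Q.real S) :=
  rfl

lemma eq_univ_of_forall_le {P Q : Measure Ω} {ε : ℝ}
    (h : ∀ S, MeasurableSet S →
      P.real S - Real.exp ε * Q.real S ≤ P.real Set.univ - Real.exp ε * Q.real Set.univ) :
    privProfile P Q ε = P.real Set.univ - Real.exp ε * Q.real Set.univ := by
  rw [eq_iSup_measureReal]
  refine le_antisymm (ciSup_le fun S ↦ h S.1 S.2) ?_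
  exact le_ciSup (f := fun S : {S : Set Ω // MeasurableSet S} ↦
    P.real S - Real.exp ε * Q.real S) ⟨_, Set.forall_mem_range.2 fun S ↦ h S.1 S.2⟩
    ⟨Set.univ, MeasurableSet.univ⟩

lemma mixture_of_one_sub_lt_exp {lam : ℝ} (hlam0 : 0 < lam) (hlam1 : lam ≤ 1)
    (PIN Q : Measure Ω) [IsFiniteMeasure PIN] [IsFiniteMeasure Q] {ε : ℝ}
    (h : 1 - lam < Real.exp ε) :
    privProfile (ENNReal.ofReal lam • PIN + ENNReal.ofReal (1 - lam) • Q) Q ε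
      = lam * privProfile PIN Q (Real.log (1 + (Real.exp ε - 1) / lam)) := by
  have hcoeff_pos : 0 < 1 + (Real.exp ε - 1) / lam := by
    rw [one_add_div hlam0.ne']
    exact div_pos (by linarith) hlam0
  rw [eq_iSup_measureReal, eq_iSup_measureReal, Real.exp_log hcoeff_pos,
    Real.mul_iSup_of_nonneg hlam0.le]
  congr 1 with S
  rw [measureReal_ofReal_smul_add_ofReal_smul_apply hlam0.le (sub_nonneg.2 hlam1)]
  field_simp
  ring

lemma mixture_of_exp_le_one_sub {lam : ℝ} (hlam0 : 0 ≤ lam)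
    (PIN Q : Measure Ω) [IsProbabilityMeasure PIN] [IsProbabilityMeasure Q] {ε : ℝ}
    (h : Real.exp ε ≤ 1 - lam) :
    privProfile (ENNReal.ofReal lam • PIN + ENNReal.ofReal (1 - lam) • Q) Q ε
      = 1 - Real.exp ε := by
  have hmix := measureReal_ofReal_smul_add_ofReal_smul_apply hlam0
    ((Real.exp_pos ε).le.trans h) PIN Q
  rw [eq_univ_of_forall_le fun S _ ↦ ?_, hmix, probReal_univ, probReal_univ]
  · ring
  · rw [hmix, hmix, probReal_univ, probReal_univ]
    have hPIN : PIN.real S ≤ 1 := measureReal_le_one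
    have hQ : Q.real S ≤ 1 := measureReal_le_one
    nlinarith

end privProfile

theorem poisson_subsampling {Ω : Type*} [MeasurableSpace Ω]
    (lam : ℝ) (hlam0 : 0 < lam) (hlam1 : lam ≤ 1)
    (PIN Q : Measure Ω) [IsProbabilityMeasure PIN] [IsProbabilityMeasure Q] (ε : ℝ) :
    privProfile (ENNReal.ofReal lam • PIN + ENNReal.ofReal (1 - lam) • Q) Q ε
      = if 1 - lam < Real.exp ε
        then lam * privProfile PIN Q (Real.log (1 + (Real.exp ε - 1) / lam))
        else 1 - Real.exp ε := by
  split_ifs with h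
  · exact privProfile.mixture_of_one_sub_lt_exp hlam0 hlam1 PIN Q h
  · exact privProfile.mixture_of_exp_le_one_sub hlam0.le PIN Q (not_lt.1 h)
end
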